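/- arXiv:2106.06727 — 3 statements merged into one kernel-verified Lean document; each statement's English description precedes it below -/
import Mathlib

section
/- Every binary tree-child phylogenetic network is orchard, i.e., it can be reduced to a network consisting of a single edge (root with one leaf) by a sequence of cherry reductions and reticulated-cherry reductions. -/
/-- A (directed) phylogenetic-network-like graph on a finite set of
natural-number labelled vertices. -/
structure PNet where
  verts : Finset ℕ
  adj : ℕ → ℕ → Prop
  adjDec : DecidableRel adj
  adj_mem : ∀ u v, adj u v → u ∈ verts ∧ v ∈ verts

attribute [instance] PNet.adjDec

namespace PNet

/-- In-degree of a vertex. -/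
def indeg (N : PNet) (v : ℕ) : ℕ := (N.verts.filter fun u => N.adj u v).card

/-- Out-degree of a vertex. -/
def outdeg (N : PNet) (v : ℕ) : ℕ := (N.verts.filter fun w => N.adj v w).card

/-- A leaf is a vertex of out-degree 0. -/
def IsLeaf (N : PNet) (v : ℕ) : Prop := v ∈ N.verts ∧ N.outdeg v = 0

/-- A reticulation node is a vertex of in-degree 2. -/
def IsRetic (N : PNet) (v : ℕ) : Prop := v ∈ N.verts ∧ N.indeg v = 2

/-- A root is a vertex of in-degree 0. -/
def IsRoot (N : PNet) (v : ℕ) : Prop := v ∈ N.verts ∧ N.indeg v = 0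

/-- The digraph is acyclic. -/
def Acyclic (N : PNet) : Prop := ∀ v, ¬ Relation.TransGen N.adj v v

/-- A binary (rooted) phylogenetic network: acyclic, a root of in-degree 0 and
out-degree 2 from which all vertices are reachable, and every other vertex is a
tree node (in 1, out 2), a reticulation node (in 2, out 1) or a leaf (in 1, out 0). -/
def IsBinary (N : PNet) : Prop :=
  N.Acyclic ∧ ∃ ρ, N.IsRoot ρ ∧ N.outdeg ρ = 2 ∧
    (∀ v ∈ N.verts, Relation.ReflTransGen N.adj ρ v) ∧
    (∀ v ∈ N.verts, v ≠ ρ →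
      (N.indeg v = 1 ∧ N.outdeg v = 2) ∨ (N.indeg v = 2 ∧ N.outdeg v = 1) ∨
      (N.indeg v = 1 ∧ N.outdeg v = 0))

/-- Tree-child: every internal node has a child that is not a reticulation. -/
def TreeChild (N : PNet) : Prop :=
  ∀ v ∈ N.verts, N.outdeg v ≠ 0 → ∃ c, N.adj v c ∧ N.indeg c ≠ 2

/-- Stack-free: no edge joins two reticulation nodes. -/
def StackFree (N : PNet) : Prop :=
  ∀ u v, N.adj u v → ¬ (N.indeg u = 2 ∧ N.indeg v = 2)

end PNet

namespace PNet

/-- Cherry reduction: for a cherry `(x,y)` (two leaves with common parent `p`),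
delete `y` and suppress the resulting degree-two node `p` (when `p` is not the
root). -/
def CherryPick (N N' : PNet) : Prop :=
  ∃ x y p, x ≠ y ∧ N.IsLeaf x ∧ N.IsLeaf y ∧ N.adj p x ∧ N.adj p y ∧
    ((N.indeg p = 0 ∧ N'.verts = N.verts \ {y} ∧
        ∀ u v, N'.adj u v ↔ (N.adj u v ∧ v ≠ y)) ∨
     (∃ q, N.adj q p ∧ N'.verts = N.verts \ {y, p} ∧
        ∀ u v, N'.adj u v ↔
          ((N.adj u v ∧ u ≠ p ∧ v ≠ p ∧ v ≠ y) ∨ (u = q ∧ v = x))))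

/-- Reticulated cherry reduction: leaves `x` and `y`, the parent `w` of `x` is
a reticulation, and a tree node `p` is a common parent of `y` and `w`.  Delete
the hybrid edge `(p,w)` and suppress the resulting degree-two nodes. -/
def RetCherryPick (N N' : PNet) : Prop :=
  ∃ x y w p, x ≠ y ∧ N.IsLeaf x ∧ N.IsLeaf y ∧
    N.adj w x ∧ N.indeg w = 2 ∧ N.adj p w ∧ N.adj p y ∧ N.indeg p ≤ 1 ∧
    ∃ q', q' ≠ p ∧ N.adj q' w ∧
    ((N.indeg p = 0 ∧ N'.verts = N.verts \ {w} ∧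
        ∀ u v, N'.adj u v ↔
          ((N.adj u v ∧ u ≠ w ∧ v ≠ w) ∨ (u = q' ∧ v = x))) ∨
     (∃ q, N.adj q p ∧ N'.verts = N.verts \ {w, p} ∧
        ∀ u v, N'.adj u v ↔
          ((N.adj u v ∧ u ≠ w ∧ v ≠ w ∧ u ≠ p ∧ v ≠ p) ∨
            (u = q' ∧ v = x) ∨ (u = q ∧ v = y))))

/-- One cherry or reticulated-cherry reduction step. -/
def Reduce (N N' : PNet) : Prop := N.CherryPick N' ∨ N.RetCherryPick N'

/-- The trivial network: a root with a single leaf child. -/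
def IsTrivialNet (T : PNet) : Prop :=
  ∃ r l, r ≠ l ∧ T.verts = {r, l} ∧ ∀ u v, (T.adj u v ↔ (u = r ∧ v = l))

/-- Orchard: reducible to the trivial network by cherry and
reticulated-cherry reductions. -/
def Orchard (N : PNet) : Prop :=
  ∃ T, IsTrivialNet T ∧ Relation.ReflTransGen Reduce N T

end PNet

/-!
Induction on the number of vertices. Let `p` be a tree node with no tree node below it. By
tree-childness `p` has a leaf child `y`; its other child is either a leaf `x`, giving a cherry,
or a reticulation `w` whose only child is a leaf `x`, giving a reticulated cherry. In the second
case `p` is not the root, for otherwise the other parent of `w` would be unreachable.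

A cherry at the root reduces to the trivial network. Every other reduction is a composite of
deleting a leaf or a reticulation edge and suppressing vertices with one parent and one child;
these keep the degrees of all surviving vertices, acyclicity and tree-childness, so the reduced
network is again binary and tree-child, with fewer vertices.
-/

namespace Finset

variable {α : Type*} {s : Finset α} {a b u : α}

lemma mem_iff_eq_of_card_eq_one (h : s.card = 1) (ha : a ∈ s) : u ∈ s ↔ u = a := by
  obtain ⟨c, rfl⟩ := card_eq_one.1 h
  rw [mem_singleton] at ha
  rw [mem_singleton, ha]

lemma mem_iff_eq_or_eq_of_card_eq_two [DecidableEq α] (h : s.card = 2) (ha : a ∈ s) (hb : b ∈ s)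
    (hab : a ≠ b) : u ∈ s ↔ u = a ∨ u = b := by
  have hs : {a, b} = s :=
    eq_of_subset_of_card_le (by simp [insert_subset_iff, ha, hb]) (by rw [h, card_pair hab])
  rw [← hs, mem_insert, mem_singleton]

end Finset

namespace PNet

variable {N N' : PNet} {a b p q q' s u v w x y : ℕ}

def parents (N : PNet) (v : ℕ) : Finset ℕ := N.verts.filter fun u => N.adj u v

def children (N : PNet) (u : ℕ) : Finset ℕ := N.verts.filter fun v => N.adj u v

@[simp]
lemma mem_parents : u ∈ N.parents v ↔ N.adj u v :=
  ⟨fun h => (Finset.mem_filter.1 h).2, fun h => Finset.mem_filter.2 ⟨(N.adj_mem _ _ h).1, h⟩⟩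

@[simp]
lemma mem_children : v ∈ N.children u ↔ N.adj u v :=
  ⟨fun h => (Finset.mem_filter.1 h).2, fun h => Finset.mem_filter.2 ⟨(N.adj_mem _ _ h).2, h⟩⟩

lemma card_parents : (N.parents v).card = N.indeg v := rfl

lemma card_children : (N.children u).card = N.outdeg u := rfl

lemma indeg_congr (h : ∀ u, N'.adj u v ↔ N.adj u v) : N'.indeg v = N.indeg v := by
  rw [← card_parents, ← card_parents]
  congr 1
  ext u
  simp [h]

lemma outdeg_congr (h : ∀ v, N'.adj u v ↔ N.adj u v) : N'.outdeg u = N.outdeg u := by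
  rw [← card_children, ← card_children]
  congr 1
  ext v
  simp [h]

lemma indeg_ne_zero_of_adj (h : N.adj u v) : N.indeg v ≠ 0 :=
  Finset.card_ne_zero.2 ⟨u, mem_parents.2 h⟩

lemma outdeg_ne_zero_of_adj (h : N.adj u v) : N.outdeg u ≠ 0 :=
  Finset.card_ne_zero.2 ⟨v, mem_children.2 h⟩

lemma exists_adj_of_indeg_ne_zero (h : N.indeg v ≠ 0) : ∃ u, N.adj u v := by
  obtain ⟨u, hu⟩ := Finset.card_ne_zero.1 h
  exact ⟨u, mem_parents.1 hu⟩

lemma exists_adj_of_outdeg_ne_zero (h : N.outdeg u ≠ 0) : ∃ v, N.adj u v := by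
  obtain ⟨v, hv⟩ := Finset.card_ne_zero.1 h
  exact ⟨v, mem_children.1 hv⟩

lemma mem_verts_of_indeg_ne_zero (h : N.indeg v ≠ 0) : v ∈ N.verts :=
  let ⟨_, hu⟩ := exists_adj_of_indeg_ne_zero h
  (N.adj_mem _ _ hu).2

lemma exists_adj_ne_of_indeg_eq_two (h : N.indeg v = 2) (a : ℕ) : ∃ b, N.adj b v ∧ b ≠ a := by
  obtain ⟨b, hb, hba⟩ := Finset.exists_mem_ne (s := N.parents v) (by rw [card_parents, h]; omega) a
  exact ⟨b, mem_parents.1 hb, hba⟩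

lemma exists_adj_ne_of_outdeg_eq_two (h : N.outdeg u = 2) (a : ℕ) : ∃ b, N.adj u b ∧ b ≠ a := by
  obtain ⟨b, hb, hba⟩ :=
    Finset.exists_mem_ne (s := N.children u) (by rw [card_children, h]; omega) a
  exact ⟨b, mem_children.1 hb, hba⟩

lemma adj_iff_of_indeg_eq_one (h : N.indeg v = 1) (ha : N.adj a v) : N.adj u v ↔ u = a := by
  simpa using Finset.mem_iff_eq_of_card_eq_one (s := N.parents v) h (mem_parents.2 ha)

lemma adj_iff_of_outdeg_eq_one (h : N.outdeg u = 1) (ha : N.adj u a) : N.adj u v ↔ v = a := by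
  simpa using Finset.mem_iff_eq_of_card_eq_one (s := N.children u) h (mem_children.2 ha)

lemma adj_iff_of_indeg_eq_two (h : N.indeg v = 2) (ha : N.adj a v) (hb : N.adj b v)
    (hab : a ≠ b) : N.adj u v ↔ u = a ∨ u = b := by
  simpa using Finset.mem_iff_eq_or_eq_of_card_eq_two (s := N.parents v) h
    (mem_parents.2 ha) (mem_parents.2 hb) hab

lemma adj_iff_of_outdeg_eq_two (h : N.outdeg u = 2) (ha : N.adj u a) (hb : N.adj u b)
    (hab : a ≠ b) : N.adj u v ↔ v = a ∨ v = b := by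
  simpa using Finset.mem_iff_eq_or_eq_of_card_eq_two (s := N.children u) h
    (mem_children.2 ha) (mem_children.2 hb) hab

lemma IsLeaf.not_adj (hy : N.IsLeaf y) : ¬ N.adj y v :=
  fun h => outdeg_ne_zero_of_adj h hy.2

lemma IsLeaf.eq_of_reflTransGen (hy : N.IsLeaf y) (h : Relation.ReflTransGen N.adj y v) :
    v = y := by
  rcases h.cases_head with rfl | ⟨c, hyc, -⟩
  · rfl
  · exact absurd hyc hy.not_adj

lemma Acyclic.ne_of_adj (hac : N.Acyclic) (h : N.adj u v) : u ≠ v := by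
  rintro rfl
  exact hac u (.single h)

lemma Acyclic.of_adj_transGen (hac : N.Acyclic)
    (h : ∀ u v, N'.adj u v → Relation.TransGen N.adj u v) : N'.Acyclic :=
  fun v hv => hac v (Relation.TransGen.lift' id h v v hv)

open Classical in
noncomputable def ancestors (N : PNet) (v : ℕ) : Finset ℕ :=
  N.verts.filter fun u => Relation.TransGen N.adj u v

lemma card_ancestors_lt (hac : N.Acyclic) (h : Relation.TransGen N.adj u v) :
    (N.ancestors u).card < (N.ancestors v).card := by
  classical
  refine Finset.card_lt_card ⟨fun a ha => ?_, fun hsub => ?_⟩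
  · obtain ⟨hav, hau⟩ := Finset.mem_filter.1 ha
    exact Finset.mem_filter.2 ⟨hav, hau.trans h⟩
  · obtain ⟨b, hub, -⟩ := Relation.TransGen.head'_iff.1 h
    exact hac u (Finset.mem_filter.1 (hsub (Finset.mem_filter.2 ⟨(N.adj_mem _ _ hub).1, h⟩))).2

lemma Acyclic.exists_maximal (hac : N.Acyclic) {P : ℕ → Prop} (hP : ∃ v ∈ N.verts, P v) :
    ∃ p ∈ N.verts, P p ∧ ∀ c, Relation.TransGen N.adj p c → ¬ P c := by
  classical
  obtain ⟨p, hp, hmax⟩ := Finset.exists_max_image (N.verts.filter P) (fun v => (N.ancestors v).card)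
    (by simpa [Finset.Nonempty] using hP)
  obtain ⟨hpv, hPp⟩ := Finset.mem_filter.1 hp
  refine ⟨p, hpv, hPp, fun c hpc hPc => ?_⟩
  obtain ⟨b, -, hbc⟩ := Relation.TransGen.tail'_iff.1 hpc
  have := hmax c (Finset.mem_filter.2 ⟨(N.adj_mem _ _ hbc).2, hPc⟩)
  exact absurd this (not_le.2 (card_ancestors_lt hac hpc))

lemma Acyclic.reflTransGen_of_indeg_ne_zero (hac : N.Acyclic)
    (hroot : ∀ v ∈ N.verts, v ≠ p → N.indeg v ≠ 0) (hv : v ∈ N.verts) :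
    Relation.ReflTransGen N.adj p v := by
  induction hk : (N.ancestors v).card using Nat.strong_induction_on generalizing v with
  | _ k ih =>
  by_cases hvp : v = p
  · exact hvp ▸ .refl
  obtain ⟨u, huv⟩ := exists_adj_of_indeg_ne_zero (hroot v hv hvp)
  exact (ih _ (hk ▸ card_ancestors_lt hac (.single huv)) (N.adj_mem _ _ huv).1 rfl).tail huv

lemma IsBinary.acyclic (hN : N.IsBinary) : N.Acyclic := hN.1

lemma IsBinary.degrees (hN : N.IsBinary) (hv : v ∈ N.verts) :
    (N.indeg v = 0 ∧ N.outdeg v = 2) ∨ (N.indeg v = 1 ∧ N.outdeg v = 2) ∨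
      (N.indeg v = 2 ∧ N.outdeg v = 1) ∨ (N.indeg v = 1 ∧ N.outdeg v = 0) := by
  obtain ⟨-, ρ, ⟨-, hρin⟩, hρout, -, hclass⟩ := hN
  by_cases hvρ : v = ρ
  · exact .inl (hvρ ▸ ⟨hρin, hρout⟩)
  · exact .inr (hclass v hv hvρ)

lemma IsBinary.reflTransGen_of_indeg_eq_zero (hN : N.IsBinary) (hp : p ∈ N.verts)
    (hp0 : N.indeg p = 0) (hv : v ∈ N.verts) : Relation.ReflTransGen N.adj p v := by
  obtain ⟨-, ρ, -, -, hreach, hclass⟩ := hN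
  have hpρ : p = ρ := by
    by_contra hne
    rcases hclass p hp hne with h | h | h <;> omega
  exact hpρ ▸ hreach v hv

lemma IsBinary.of_degrees (hN : N.IsBinary) (hac : N'.Acyclic) (hsub : N'.verts ⊆ N.verts)
    (hdeg : ∀ v ∈ N'.verts, N'.indeg v = N.indeg v ∧ N'.outdeg v = N.outdeg v)
    (hroot : ∀ v ∈ N.verts, N.indeg v = 0 → v ∈ N'.verts) : N'.IsBinary := by
  obtain ⟨-, ρ, ⟨hρ, hρin⟩, hρout, -, hclass⟩ := hN
  have hρ' := hroot ρ hρ hρin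
  have hclass' : ∀ v ∈ N'.verts, v ≠ ρ →
      (N'.indeg v = 1 ∧ N'.outdeg v = 2) ∨ (N'.indeg v = 2 ∧ N'.outdeg v = 1) ∨
        (N'.indeg v = 1 ∧ N'.outdeg v = 0) := by
    intro v hv hvρ
    rw [(hdeg v hv).1, (hdeg v hv).2]
    exact hclass v (hsub hv) hvρ
  refine ⟨hac, ρ, ⟨hρ', (hdeg ρ hρ').1.trans hρin⟩, (hdeg ρ hρ').2.trans hρout,
    fun v hv => hac.reflTransGen_of_indeg_ne_zero (fun u hu huρ => ?_) hv, hclass'⟩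
  rcases hclass' u hu huρ with h | h | h <;> omega

lemma IsBinary.indeg_eq_one_of_isLeaf (hN : N.IsBinary) (hx : N.IsLeaf x) : N.indeg x = 1 := by
  have := hx.2
  rcases hN.degrees hx.1 with h | h | h | h <;> omega

lemma IsBinary.isLeaf_of_degrees (hN : N.IsBinary) (h : N.adj u v) (hin : N.indeg v ≠ 2)
    (hout : N.outdeg v ≠ 2) : N.IsLeaf v := by
  have := indeg_ne_zero_of_adj h
  refine ⟨(N.adj_mem _ _ h).2, ?_⟩
  rcases hN.degrees (N.adj_mem _ _ h).2 with h | h | h | h <;> omega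

lemma IsBinary.outdeg_eq_one_of_indeg_eq_two (hN : N.IsBinary) (hw : N.indeg w = 2) :
    N.outdeg w = 1 := by
  have hw0 : N.indeg w ≠ 0 := by omega
  rcases hN.degrees (mem_verts_of_indeg_ne_zero hw0) with h | h | h | h <;> omega

lemma IsBinary.indeg_eq_one_of_outdeg_eq_two (hN : N.IsBinary) (hqp : N.adj q p)
    (hp : N.outdeg p = 2) : N.indeg p = 1 := by
  have := indeg_ne_zero_of_adj hqp
  rcases hN.degrees (N.adj_mem _ _ hqp).2 with h | h | h | h <;> omega

lemma IsBinary.outdeg_eq_two (hN : N.IsBinary) (ha : N.adj u a) (hb : N.adj u b) (hab : a ≠ b) :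
    N.outdeg u = 2 := by
  have : 2 ≤ N.outdeg u := by
    rw [← card_children, ← Finset.card_pair hab]
    exact Finset.card_le_card (by simp [Finset.insert_subset_iff, ha, hb])
  rcases hN.degrees (N.adj_mem _ _ ha).1 with h | h | h | h <;> omega

lemma IsBinary.adj_iff_eq_or_eq (hN : N.IsBinary) (ha : N.adj u a) (hb : N.adj u b)
    (hab : a ≠ b) : N.adj u v ↔ v = a ∨ v = b :=
  adj_iff_of_outdeg_eq_two (hN.outdeg_eq_two ha hb hab) ha hb hab

def deleteVertex (N : PNet) (y : ℕ) : PNet where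
  verts := N.verts.erase y
  adj u v := N.adj u v ∧ u ≠ y ∧ v ≠ y
  adjDec _ _ := inferInstanceAs (Decidable (_ ∧ _))
  adj_mem _ _ h :=
    ⟨Finset.mem_erase.2 ⟨h.2.1, (N.adj_mem _ _ h.1).1⟩,
      Finset.mem_erase.2 ⟨h.2.2, (N.adj_mem _ _ h.1).2⟩⟩

def deleteEdge (N : PNet) (a b : ℕ) : PNet where
  verts := N.verts
  adj u v := N.adj u v ∧ ¬ (u = a ∧ v = b)
  adjDec _ _ := inferInstanceAs (Decidable (_ ∧ _))
  adj_mem _ _ h := N.adj_mem _ _ h.1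

def suppress (N : PNet) (s : ℕ) : PNet where
  verts := N.verts.erase s
  adj u v := u ≠ s ∧ v ≠ s ∧ (N.adj u v ∨ N.adj u s ∧ N.adj s v)
  adjDec _ _ := inferInstanceAs (Decidable (_ ∧ _))
  adj_mem u v h := by
    refine ⟨Finset.mem_erase.2 ⟨h.1, ?_⟩, Finset.mem_erase.2 ⟨h.2.1, ?_⟩⟩ <;>
      rcases h.2.2 with h | ⟨hus, hsv⟩
    exacts [(N.adj_mem _ _ h).1, (N.adj_mem _ _ hus).1, (N.adj_mem _ _ h).2,
      (N.adj_mem _ _ hsv).2]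

/-- `not_adj` ensures that suppressing `s` creates no parallel edge `a → b`, so that the
degrees of `a` and `b` survive. -/
structure IsSuppressible (N : PNet) (s a b : ℕ) : Prop where
  parent_iff : ∀ u, N.adj u s ↔ u = a
  child_iff : ∀ v, N.adj s v ↔ v = b
  not_adj : ¬ N.adj a b

@[simp]
lemma deleteVertex_adj : (N.deleteVertex y).adj u v ↔ N.adj u v ∧ u ≠ y ∧ v ≠ y := Iff.rfl

@[simp]
lemma deleteEdge_adj : (N.deleteEdge a b).adj u v ↔ N.adj u v ∧ ¬ (u = a ∧ v = b) := Iff.rfl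

@[simp]
lemma suppress_adj : (N.suppress s).adj u v ↔ u ≠ s ∧ v ≠ s ∧ (N.adj u v ∨ N.adj u s ∧ N.adj s v) :=
  Iff.rfl

lemma deleteVertex_adj_of_isLeaf (hy : N.IsLeaf y) :
    (N.deleteVertex y).adj u v ↔ N.adj u v ∧ v ≠ y := by
  simp only [deleteVertex_adj]
  exact ⟨fun h => ⟨h.1, h.2.2⟩, fun h => ⟨h.1, fun huy => hy.not_adj (huy ▸ h.1), h.2⟩⟩

lemma IsSuppressible.ne_left (h : N.IsSuppressible s a b) : a ≠ s := by
  rintro rfl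
  have hss : N.adj a a := (h.parent_iff a).2 rfl
  exact h.not_adj ((h.child_iff a).1 hss ▸ hss)

lemma IsSuppressible.ne_right (h : N.IsSuppressible s a b) : b ≠ s := by
  rintro rfl
  have hss : N.adj b b := (h.child_iff b).2 rfl
  exact h.not_adj ((h.parent_iff b).1 hss ▸ hss)

lemma IsSuppressible.suppress_adj (h : N.IsSuppressible s a b) :
    (N.suppress s).adj u v ↔ N.adj u v ∧ u ≠ s ∧ v ≠ s ∨ u = a ∧ v = b := by
  have ha := h.ne_left
  have hb := h.ne_right
  simp only [PNet.suppress_adj, h.parent_iff, h.child_iff]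
  constructor
  · rintro ⟨hu, hv, huv | huv⟩
    exacts [.inl ⟨huv, hu, hv⟩, .inr huv]
  · rintro (⟨huv, hu, hv⟩ | ⟨rfl, rfl⟩)
    exacts [⟨hu, hv, .inl huv⟩, ⟨ha, hb, .inr ⟨rfl, rfl⟩⟩]

lemma indeg_deleteVertex (hv : v ≠ y) (hyv : ¬ N.adj y v) :
    (N.deleteVertex y).indeg v = N.indeg v :=
  indeg_congr fun _ => ⟨fun h => h.1, fun h => ⟨h, fun huy => hyv (huy ▸ h), hv⟩⟩

lemma outdeg_deleteVertex (hu : u ≠ y) (huy : ¬ N.adj u y) :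
    (N.deleteVertex y).outdeg u = N.outdeg u :=
  outdeg_congr fun _ => ⟨fun h => h.1, fun h => ⟨h, hu, fun hvy => huy (hvy ▸ h)⟩⟩

lemma indeg_deleteEdge (hv : v ≠ b) : (N.deleteEdge a b).indeg v = N.indeg v :=
  indeg_congr fun _ => ⟨fun h => h.1, fun h => ⟨h, fun h' => hv h'.2⟩⟩

lemma outdeg_deleteEdge (hu : u ≠ a) : (N.deleteEdge a b).outdeg u = N.outdeg u :=
  outdeg_congr fun _ => ⟨fun h => h.1, fun h => ⟨h, fun h' => hu h'.1⟩⟩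

lemma IsSuppressible.indeg_suppress (h : N.IsSuppressible s a b) (hv : v ≠ s) :
    (N.suppress s).indeg v = N.indeg v := by
  by_cases hvb : v = b
  · subst hvb
    have hparents : (N.suppress s).parents v = insert a ((N.parents v).erase s) := by
      ext u
      simp only [mem_parents, h.suppress_adj, Finset.mem_insert, Finset.mem_erase]
      tauto
    rw [← card_parents, ← card_parents, hparents, Finset.card_insert_of_notMem
      (fun ha => h.not_adj (mem_parents.1 (Finset.mem_of_mem_erase ha))),
      Finset.card_erase_add_one (mem_parents.2 ((h.child_iff v).2 rfl))]
  · refine indeg_congr fun u => ?_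
    rw [h.suppress_adj]
    refine ⟨fun h' => h'.elim (·.1) fun h' => absurd h'.2 hvb, fun huv => .inl ⟨huv, ?_, hv⟩⟩
    rintro rfl
    exact hvb ((h.child_iff v).1 huv)

lemma IsSuppressible.outdeg_suppress (h : N.IsSuppressible s a b) (hu : u ≠ s) :
    (N.suppress s).outdeg u = N.outdeg u := by
  by_cases hua : u = a
  · subst hua
    have hchildren : (N.suppress s).children u = insert b ((N.children u).erase s) := by
      ext v
      simp only [mem_children, h.suppress_adj, Finset.mem_insert, Finset.mem_erase]
      tauto
    rw [← card_children, ← card_children, hchildren, Finset.card_insert_of_notMem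
      (fun hb => h.not_adj (mem_children.1 (Finset.mem_of_mem_erase hb))),
      Finset.card_erase_add_one (mem_children.2 ((h.parent_iff u).2 rfl))]
  · refine outdeg_congr fun v => ?_
    rw [h.suppress_adj]
    refine ⟨fun h' => h'.elim (·.1) fun h' => absurd h'.1 hua, fun huv => .inl ⟨huv, hu, ?_⟩⟩
    rintro rfl
    exact hua ((h.parent_iff u).1 huv)

lemma Acyclic.deleteVertex (hac : N.Acyclic) : (N.deleteVertex y).Acyclic :=
  hac.of_adj_transGen fun _ _ h => .single h.1

lemma Acyclic.deleteEdge (hac : N.Acyclic) : (N.deleteEdge a b).Acyclic :=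
  hac.of_adj_transGen fun _ _ h => .single h.1

lemma Acyclic.suppress (hac : N.Acyclic) : (N.suppress s).Acyclic :=
  hac.of_adj_transGen fun _ _ h => h.2.2.elim .single fun h => .tail (.single h.1) h.2

lemma TreeChild.deleteVertex (htc : N.TreeChild) (hy : N.IsLeaf y)
    (hsib : ∀ u, N.adj u y → ∃ c, c ≠ y ∧ N.adj u c ∧ N.indeg c ≠ 2) :
    (N.deleteVertex y).TreeChild := by
  intro v hv hout
  obtain ⟨hvy, hv⟩ := Finset.mem_erase.1 hv
  obtain ⟨c₀, hvc₀⟩ := exists_adj_of_outdeg_ne_zero hout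
  obtain ⟨c, hcy, hvc, hc⟩ : ∃ c, c ≠ y ∧ N.adj v c ∧ N.indeg c ≠ 2 := by
    obtain ⟨c, hvc, hc⟩ := htc v hv (outdeg_ne_zero_of_adj hvc₀.1)
    by_cases hcy : c = y
    · exact hsib v (hcy ▸ hvc)
    · exact ⟨c, hcy, hvc, hc⟩
  exact ⟨c, ⟨hvc, hvy, hcy⟩, by rwa [indeg_deleteVertex hcy hy.not_adj]⟩

lemma TreeChild.deleteEdge (htc : N.TreeChild) (hb : N.indeg b = 2) :
    (N.deleteEdge a b).TreeChild := by
  intro v hv hout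
  obtain ⟨c₀, hvc₀⟩ := exists_adj_of_outdeg_ne_zero hout
  obtain ⟨c, hvc, hc⟩ := htc v hv (outdeg_ne_zero_of_adj hvc₀.1)
  have hcb : c ≠ b := fun hcb => hc (hcb ▸ hb)
  exact ⟨c, ⟨hvc, fun h => hcb h.2⟩, by rwa [indeg_deleteEdge hcb]⟩

lemma TreeChild.suppress (htc : N.TreeChild) (h : N.IsSuppressible s a b) :
    (N.suppress s).TreeChild := by
  intro v hv hout
  obtain ⟨hvs, hv⟩ := Finset.mem_erase.1 hv
  rw [h.outdeg_suppress hvs] at hout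
  obtain ⟨c, hvc, hc⟩ := htc v hv hout
  by_cases hcs : c = s
  · -- the new child `b` of `a` is not a reticulation, by tree-childness at `s`
    subst hcs
    have hsb : N.adj c b := (h.child_iff b).2 rfl
    obtain ⟨d, hcd, hd⟩ := htc c (N.adj_mem _ _ hvc).2 (outdeg_ne_zero_of_adj hsb)
    obtain rfl := (h.child_iff d).1 hcd
    obtain rfl := (h.parent_iff v).1 hvc
    exact ⟨d, h.suppress_adj.2 (.inr ⟨rfl, rfl⟩), by rwa [h.indeg_suppress h.ne_right]⟩
  · exact ⟨c, h.suppress_adj.2 (.inl ⟨hvc, hvs, hcs⟩), by rwa [h.indeg_suppress hcs]⟩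

def IsCherry (N : PNet) (x y p : ℕ) : Prop :=
  x ≠ y ∧ N.IsLeaf x ∧ N.IsLeaf y ∧ N.adj p x ∧ N.adj p y

def IsRetCherry (N : PNet) (x y w p : ℕ) : Prop :=
  x ≠ y ∧ N.IsLeaf x ∧ N.IsLeaf y ∧ N.adj w x ∧ N.indeg w = 2 ∧ N.adj p w ∧ N.adj p y

/-- Below a lowest tree node `p` there are only reticulations and leaves, so the
non-reticulation children provided by tree-childness are leaves. -/
lemma IsBinary.exists_isCherry_or_isRetCherry (hN : N.IsBinary) (htc : N.TreeChild) :
    (∃ x y p, N.IsCherry x y p) ∨ ∃ x y w p, N.IsRetCherry x y w p := by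
  obtain ⟨p, hp, hpout, hlow⟩ := hN.acyclic.exists_maximal (P := fun v => N.outdeg v = 2)
    (by obtain ⟨-, ρ, hρ, hρout, -⟩ := hN; exact ⟨ρ, hρ.1, hρout⟩)
  have leaf_below : ∀ u c, Relation.TransGen N.adj p c → N.adj u c → N.indeg c ≠ 2 →
      N.IsLeaf c :=
    fun u c hpc huc hc => hN.isLeaf_of_degrees huc hc (hlow c hpc)
  obtain ⟨y, hpy, hy⟩ := htc p hp (by omega)
  have hyleaf := leaf_below p y (.single hpy) hpy hy
  obtain ⟨z, hpz, hzy⟩ := exists_adj_ne_of_outdeg_eq_two hpout y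
  by_cases hz : N.indeg z = 2
  · obtain ⟨x, hzx, hx⟩ := htc z (N.adj_mem _ _ hpz).2
      (by rw [hN.outdeg_eq_one_of_indeg_eq_two hz]; omega)
    have hxy : x ≠ y := by
      rintro rfl
      obtain rfl := (adj_iff_of_indeg_eq_one (hN.indeg_eq_one_of_isLeaf hyleaf) hpy).1 hzx
      exact hN.acyclic.ne_of_adj hpz rfl
    exact .inr ⟨x, y, z, p, hxy, leaf_below z x (.tail (.single hpz) hzx) hzx hx, hyleaf, hzx,
      hz, hpz, hpy⟩
  · exact .inl ⟨z, y, p, hzy, leaf_below p z (.single hpz) hpz hz, hyleaf, hpz, hpy⟩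

lemma IsCherry.verts_eq (hN : N.IsBinary) (hc : N.IsCherry x y p) (hp0 : N.indeg p = 0) :
    N.verts = {p, x, y} := by
  obtain ⟨hxy, hx, hy, hpx, hpy⟩ := hc
  have hp := (N.adj_mem _ _ hpx).1
  refine Finset.Subset.antisymm (fun v hv => ?_)
    (by simp [Finset.insert_subset_iff, hp, hx.1, hy.1])
  rcases (hN.reflTransGen_of_indeg_eq_zero hp hp0 hv).cases_head with rfl | ⟨c, hpc, hcv⟩
  · simp
  rcases (hN.adj_iff_eq_or_eq hpx hpy hxy).1 hpc with rfl | rfl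
  · simp [hx.eq_of_reflTransGen hcv]
  · simp [hy.eq_of_reflTransGen hcv]

lemma IsCherry.isTrivialNet_deleteVertex (hN : N.IsBinary) (hc : N.IsCherry x y p)
    (hp0 : N.indeg p = 0) : (N.deleteVertex y).IsTrivialNet := by
  have hverts := hc.verts_eq hN hp0
  obtain ⟨hxy, hx, hy, hpx, hpy⟩ := hc
  have hpx' := hN.acyclic.ne_of_adj hpx
  have hpy' := hN.acyclic.ne_of_adj hpy
  refine ⟨p, x, hpx', ?_, fun u v => ?_⟩
  · change N.verts.erase y = {p, x}
    rw [hverts]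
    ext v
    simp only [Finset.mem_erase, Finset.mem_insert, Finset.mem_singleton]
    grind
  rw [deleteVertex_adj_of_isLeaf hy]
  constructor
  · rintro ⟨huv, hvy⟩
    have hu : u ∈ ({p, x, y} : Finset ℕ) := hverts ▸ (N.adj_mem _ _ huv).1
    simp only [Finset.mem_insert, Finset.mem_singleton] at hu
    rcases hu with rfl | rfl | rfl
    · exact ⟨rfl, ((hN.adj_iff_eq_or_eq hpx hpy hxy).1 huv).resolve_right hvy⟩
    · exact absurd huv hx.not_adj
    · exact absurd huv hy.not_adj
  · rintro ⟨rfl, rfl⟩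
    exact ⟨hpx, hxy⟩

lemma IsCherry.cherryPick_deleteVertex (hc : N.IsCherry x y p) (hp0 : N.indeg p = 0) :
    N.CherryPick (N.deleteVertex y) :=
  let ⟨hxy, hx, hy, hpx, hpy⟩ := hc
  ⟨x, y, p, hxy, hx, hy, hpx, hpy,
    .inl ⟨hp0, Finset.erase_eq _ _, fun _ _ => deleteVertex_adj_of_isLeaf hy⟩⟩

lemma IsCherry.isSuppressible (hN : N.IsBinary) (hc : N.IsCherry x y p) (hqp : N.adj q p) :
    (N.deleteVertex y).IsSuppressible p q x := by
  obtain ⟨hxy, hx, hy, hpx, hpy⟩ := hc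
  have hchp := fun v => hN.adj_iff_eq_or_eq (v := v) hpx hpy hxy
  have hparp := fun u => adj_iff_of_indeg_eq_one (u := u)
    (hN.indeg_eq_one_of_outdeg_eq_two hqp (hN.outdeg_eq_two hpx hpy hxy)) hqp
  have hparx := fun u => adj_iff_of_indeg_eq_one (u := u) (hN.indeg_eq_one_of_isLeaf hx) hpx
  have hpy' := hN.acyclic.ne_of_adj hpy
  have hqy : q ≠ y := fun h => hy.not_adj (h ▸ hqp)
  refine ⟨fun u => ?_, fun v => ?_, fun h => hN.acyclic.ne_of_adj hqp ((hparx _).1 h.1)⟩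
  · simp only [deleteVertex_adj, hparp]
    grind
  · rw [deleteVertex_adj_of_isLeaf hy, hchp]
    grind

lemma IsCherry.exists_cherryPick (hN : N.IsBinary) (htc : N.TreeChild) (hc : N.IsCherry x y p)
    (hp0 : N.indeg p ≠ 0) :
    ∃ N', N.CherryPick N' ∧ N'.IsBinary ∧ N'.TreeChild ∧ N'.verts.card < N.verts.card := by
  obtain ⟨q, hqp⟩ := exists_adj_of_indeg_ne_zero hp0
  have hs := hc.isSuppressible hN hqp
  obtain ⟨hxy, hx, hy, hpx, hpy⟩ := hc
  have hy1 := hN.indeg_eq_one_of_isLeaf hy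
  have hpary := fun u => adj_iff_of_indeg_eq_one (u := u) hy1 hpy
  refine ⟨(N.deleteVertex y).suppress p,
    ⟨x, y, p, hxy, hx, hy, hpx, hpy, .inr ⟨q, hqp, ?_, fun u v => ?_⟩⟩, ?_, ?_, ?_⟩
  · ext v
    simp only [suppress, deleteVertex, Finset.mem_erase, Finset.mem_sdiff, Finset.mem_insert,
      Finset.mem_singleton]
    tauto
  · rw [hs.suppress_adj, deleteVertex_adj_of_isLeaf hy]
    tauto
  · refine hN.of_degrees hN.acyclic.deleteVertex.suppress (fun v hv => ?_) (fun v hv => ?_)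
      fun v hv hv0 => ?_
    · exact Finset.mem_of_mem_erase (Finset.mem_of_mem_erase hv)
    · obtain ⟨hvp, hvy, -⟩ : v ≠ p ∧ v ≠ y ∧ v ∈ N.verts := by
        simpa [suppress, deleteVertex] using hv
      rw [hs.indeg_suppress hvp, hs.outdeg_suppress hvp, indeg_deleteVertex hvy hy.not_adj,
        outdeg_deleteVertex hvy fun h => hvp ((hpary v).1 h)]
      exact ⟨rfl, rfl⟩
    · simp only [suppress, deleteVertex, Finset.mem_erase]
      exact ⟨fun h => hp0 (h ▸ hv0), fun h => by subst h; omega, hv⟩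
  · refine (htc.deleteVertex hy fun u huy => ⟨x, hxy, (hpary u).1 huy ▸ hpx, ?_⟩).suppress hs
    rw [hN.indeg_eq_one_of_isLeaf hx]
    omega
  · exact Finset.card_erase_le.trans_lt (Finset.card_erase_lt_of_mem hy.1)

/-- If `p` were the root, every vertex would lie below `p`, but the second parent of `w`
cannot. -/
lemma IsRetCherry.indeg_ne_zero (hN : N.IsBinary) (hc : N.IsRetCherry x y w p) :
    N.indeg p ≠ 0 := by
  obtain ⟨-, -, hy, hwx, hw, hpw, hpy⟩ := hc
  intro hp0
  obtain ⟨q', hq'w, hq'p⟩ := exists_adj_ne_of_indeg_eq_two hw p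
  have hwy : w ≠ y := fun h => hy.not_adj (h ▸ hwx)
  rcases (hN.reflTransGen_of_indeg_eq_zero (N.adj_mem _ _ hpw).1 hp0
    (N.adj_mem _ _ hq'w).1).cases_head with h | ⟨c, hpc, hcq'⟩
  · exact hq'p h.symm
  rcases (hN.adj_iff_eq_or_eq hpw hpy hwy).1 hpc with rfl | rfl
  · exact hN.acyclic c (.tail' hcq' hq'w)
  · exact hy.not_adj (hy.eq_of_reflTransGen hcq' ▸ hq'w)

lemma IsRetCherry.isSuppressible_deleteEdge (hN : N.IsBinary) (hc : N.IsRetCherry x y w p)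
    (hq'w : N.adj q' w) (hq'p : q' ≠ p) : (N.deleteEdge p w).IsSuppressible w q' x := by
  obtain ⟨-, hx, -, hwx, hw, hpw, -⟩ := hc
  have hparw := fun u => adj_iff_of_indeg_eq_two (u := u) hw hpw hq'w hq'p.symm
  have hchw := fun v =>
    adj_iff_of_outdeg_eq_one (v := v) (hN.outdeg_eq_one_of_indeg_eq_two hw) hwx
  have hparx := fun u => adj_iff_of_indeg_eq_one (u := u) (hN.indeg_eq_one_of_isLeaf hx) hwx
  have hpw' := hN.acyclic.ne_of_adj hpw
  refine ⟨fun u => ?_, fun v => ?_, fun h => hN.acyclic.ne_of_adj hq'w ((hparx _).1 h.1)⟩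
  · simp only [deleteEdge_adj, hparw]
    grind
  · simp only [deleteEdge_adj, hchw]
    grind

lemma IsRetCherry.isSuppressible_suppress (hN : N.IsBinary) (hc : N.IsRetCherry x y w p)
    (hq'w : N.adj q' w) (hq'p : q' ≠ p) (hqp : N.adj q p) :
    ((N.deleteEdge p w).suppress w).IsSuppressible p q y := by
  have hs := hc.isSuppressible_deleteEdge hN hq'w hq'p
  obtain ⟨hxy, hx, hy, hwx, hw, hpw, hpy⟩ := hc
  have hwy : w ≠ y := fun h => hy.not_adj (h ▸ hwx)
  have hpout := hN.outdeg_eq_two hpw hpy hwy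
  have hchp := fun v => hN.adj_iff_eq_or_eq (v := v) hpw hpy hwy
  have hparp := fun u =>
    adj_iff_of_indeg_eq_one (u := u) (hN.indeg_eq_one_of_outdeg_eq_two hqp hpout) hqp
  have hpary := fun u => adj_iff_of_indeg_eq_one (u := u) (hN.indeg_eq_one_of_isLeaf hy) hpy
  have hpw' := hN.acyclic.ne_of_adj hpw
  have hpx : p ≠ x := fun h => hx.not_adj (h ▸ hpw)
  have hqw : q ≠ w := fun h => hN.acyclic p (.tail (.single hpw) (h ▸ hqp))
  refine ⟨fun u => ?_, fun v => ?_, fun h => ?_⟩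
  · rw [hs.suppress_adj, deleteEdge_adj, hparp]
    grind
  · rw [hs.suppress_adj, deleteEdge_adj, hchp]
    grind
  · rw [hs.suppress_adj, deleteEdge_adj, hpary] at h
    grind [hN.acyclic.ne_of_adj hqp]

lemma IsRetCherry.exists_retCherryPick (hN : N.IsBinary) (htc : N.TreeChild)
    (hc : N.IsRetCherry x y w p) :
    ∃ N', N.RetCherryPick N' ∧ N'.IsBinary ∧ N'.TreeChild ∧ N'.verts.card < N.verts.card := by
  have hp0 := hc.indeg_ne_zero hN
  obtain ⟨q, hqp⟩ := exists_adj_of_indeg_ne_zero hp0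
  have ⟨hxy, hx, hy, hwx, hw, hpw, hpy⟩ := hc
  obtain ⟨q', hq'w, hq'p⟩ := exists_adj_ne_of_indeg_eq_two hw p
  have hs₁ := hc.isSuppressible_deleteEdge hN hq'w hq'p
  have hs₂ := hc.isSuppressible_suppress hN hq'w hq'p hqp
  have hp1 := hN.indeg_eq_one_of_outdeg_eq_two hqp
    (hN.outdeg_eq_two hpw hpy fun h => hy.not_adj (h ▸ hwx))
  have hpx : p ≠ x := fun h => hx.not_adj (h ▸ hpw)
  refine ⟨((N.deleteEdge p w).suppress w).suppress p, ⟨x, y, w, p, hxy, hx, hy, hwx, hw, hpw, hpy,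
    hp1.le, q', hq'p, hq'w, .inr ⟨q, hqp, ?_, fun u v => ?_⟩⟩, ?_, ?_, ?_⟩
  · ext v
    simp only [suppress, deleteEdge, Finset.mem_erase, Finset.mem_sdiff, Finset.mem_insert,
      Finset.mem_singleton]
    tauto
  · rw [hs₂.suppress_adj, hs₁.suppress_adj, deleteEdge_adj]
    grind
  · refine hN.of_degrees hN.acyclic.deleteEdge.suppress.suppress (fun v hv => ?_) (fun v hv => ?_)
      fun v hv hv0 => ?_
    · exact Finset.mem_of_mem_erase (Finset.mem_of_mem_erase hv)
    · obtain ⟨hvp, hvw, -⟩ : v ≠ p ∧ v ≠ w ∧ v ∈ N.verts := by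
        simpa [suppress, deleteEdge] using hv
      rw [hs₂.indeg_suppress hvp, hs₂.outdeg_suppress hvp, hs₁.indeg_suppress hvw,
        hs₁.outdeg_suppress hvw, indeg_deleteEdge hvw, outdeg_deleteEdge hvp]
      exact ⟨rfl, rfl⟩
    · simp only [suppress, deleteEdge, Finset.mem_erase]
      exact ⟨fun h => hp0 (h ▸ hv0), fun h => by subst h; omega, hv⟩
  · exact ((htc.deleteEdge hw).suppress hs₁).suppress hs₂
  · exact Finset.card_erase_le.trans_lt (Finset.card_erase_lt_of_mem (N.adj_mem _ _ hwx).1)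

lemma IsBinary.exists_reduce (hN : N.IsBinary) (htc : N.TreeChild) :
    ∃ N', N.Reduce N' ∧
      (N'.IsTrivialNet ∨ N'.IsBinary ∧ N'.TreeChild ∧ N'.verts.card < N.verts.card) := by
  rcases hN.exists_isCherry_or_isRetCherry htc with ⟨x, y, p, hc⟩ | ⟨x, y, w, p, hc⟩
  · by_cases hp0 : N.indeg p = 0
    · exact ⟨_, .inl (hc.cherryPick_deleteVertex hp0), .inl (hc.isTrivialNet_deleteVertex hN hp0)⟩
    · obtain ⟨N', hpick, hN'⟩ := hc.exists_cherryPick hN htc hp0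
      exact ⟨N', .inl hpick, .inr hN'⟩
  · obtain ⟨N', hpick, hN'⟩ := hc.exists_retCherryPick hN htc
    exact ⟨N', .inr hpick, .inr hN'⟩

end PNet

open PNet in
/-- Every binary tree-child phylogenetic network is orchard. -/
theorem stmt4 (N : PNet) (hbin : N.IsBinary) (htc : N.TreeChild) :
    N.Orchard := by
  induction hk : N.verts.card using Nat.strong_induction_on generalizing N with
  | _ k ih =>
  obtain ⟨N', hred, hN' | ⟨hbin', htc', hcard⟩⟩ := hbin.exists_reduce htc
  · exact ⟨N', hN', .single hred⟩
  · obtain ⟨T, hT, hN'T⟩ := ih _ (hk ▸ hcard) N' hbin' htc' rfl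
    exact ⟨T, hT, .head hred hN'T⟩
end

section
/- Every binary phylogenetic network can be generated from the single-leaf network by a finite sequence of speciation events and y-type merging events. A speciation event replaces a leaf by a tree node with two new leaf children; a y-type merging event replaces two distinct leaves x and y by a reticulation node with in-edges from the former parents of x and y and a single new leaf child. -/
namespace PNet

/-- The network consisting of a single leaf (one vertex, no edges). -/
def SingleLeaf (N : PNet) : Prop := ∃ v, N.verts = {v} ∧ ∀ u w, ¬ N.adj u w

/-- Speciation event: a leaf `x` is replaced by a tree node with two new leaf
children `a` and `b`. -/
def Speciation (N N' : PNet) : Prop :=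
  ∃ x a b, N.IsLeaf x ∧ a ∉ N.verts ∧ b ∉ N.verts ∧ a ≠ b ∧
    N'.verts = insert a (insert b N.verts) ∧
    ∀ u v, N'.adj u v ↔ (N.adj u v ∨ (u = x ∧ v = a) ∨ (u = x ∧ v = b))

/-- y-type merging event: two distinct leaves `x` and `y` (with distinct
parents) are glued into a reticulation node with in-edges from the former
parents of `x` and `y` and a single new leaf child `z`. -/
def YMerge (N N' : PNet) : Prop :=
  ∃ x y z px py, x ≠ y ∧ N.IsLeaf x ∧ N.IsLeaf y ∧ z ∉ N.verts ∧
    N.adj px x ∧ N.adj py y ∧ px ≠ py ∧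
    N'.verts = insert z (N.verts \ {y}) ∧
    ∀ u v, N'.adj u v ↔
      ((N.adj u v ∧ v ≠ y) ∨ (u = py ∧ v = x) ∨ (u = x ∧ v = z))

/-- n-type (HGT) reticulation event: subdivide the pendant edges above two
distinct leaves `x` and `y` with new nodes `u₀` and `v₀` and add the arc
`(u₀, v₀)`, making `v₀` a reticulation node; `x` and `y` remain leaves. -/
def HGT (N N' : PNet) : Prop :=
  ∃ x y u₀ v₀ px py, x ≠ y ∧ N.IsLeaf x ∧ N.IsLeaf y ∧
    N.adj px x ∧ N.adj py y ∧
    u₀ ∉ N.verts ∧ v₀ ∉ N.verts ∧ u₀ ≠ v₀ ∧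
    N'.verts = insert u₀ (insert v₀ N.verts) ∧
    ∀ a b, N'.adj a b ↔
      ((N.adj a b ∧ b ≠ x ∧ b ≠ y) ∨ (a = px ∧ b = u₀) ∨ (a = py ∧ b = v₀) ∨
        (a = u₀ ∧ b = x) ∨ (a = v₀ ∧ b = y) ∨ (a = u₀ ∧ b = v₀))

/-- m-type hybrid-speciation event: two distinct leaves `x` and `y` each become
tree nodes, with new leaf children `x'` resp. `y'` and with edges into a shared
new reticulation node `w`, which has a single new leaf child `z`. -/
def MType (N N' : PNet) : Prop :=
  ∃ x y x' y' w z, x ≠ y ∧ N.IsLeaf x ∧ N.IsLeaf y ∧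
    x' ∉ N.verts ∧ y' ∉ N.verts ∧ w ∉ N.verts ∧ z ∉ N.verts ∧
    x' ≠ y' ∧ x' ≠ w ∧ x' ≠ z ∧ y' ≠ w ∧ y' ≠ z ∧ w ≠ z ∧
    N'.verts = insert x' (insert y' (insert w (insert z N.verts))) ∧
    ∀ a b, N'.adj a b ↔
      (N.adj a b ∨ (a = x ∧ b = x') ∨ (a = x ∧ b = w) ∨
        (a = y ∧ b = y') ∨ (a = y ∧ b = w) ∨ (a = w ∧ b = z))

/-- Extinction event: delete a leaf `x` and suppress its resulting degree-two
parent `p` (when `p` is not the root). -/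
def Extinct (N N' : PNet) : Prop :=
  ∃ x p c, N.IsLeaf x ∧ N.adj p x ∧ N.adj p c ∧ c ≠ x ∧
    ((N.indeg p = 0 ∧ N'.verts = N.verts \ {x} ∧
        ∀ u v, N'.adj u v ↔ (N.adj u v ∧ v ≠ x)) ∨
     (∃ q, N.adj q p ∧ N'.verts = N.verts \ {x, p} ∧
        ∀ u v, N'.adj u v ↔
          ((N.adj u v ∧ u ≠ p ∧ v ≠ p ∧ v ≠ x) ∨ (u = q ∧ v = c))))

/-- Isomorphism of (leaf-unlabelled) network topologies. -/
def Iso (M N : PNet) : Prop :=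
  ∃ f : ℕ → ℕ, Set.BijOn f ↑M.verts ↑N.verts ∧
    ∀ u v, u ∈ M.verts → v ∈ M.verts → (M.adj u v ↔ N.adj (f u) (f v))

end PNet

/-!
Induction on the number of edges. In an acyclic network choose an internal vertex `v` with no
internal vertex below it, so all children of `v` are leaves. If `v` has two leaf children,
deleting them undoes a speciation event; when `v` is the root this leaves the single-leaf network.
If `v` is a reticulation above the leaf `z`, deleting `z` and redirecting the edge from one
parent of `v` to a fresh leaf `y` undoes the y-type merging of the leaves `v` and `y`. In both
cases the smaller network is again binary and has fewer edges.
-/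

namespace Relation

theorem ReflTransGen.of_backward_closed {α : Type*} {r r' : α → α → Prop} {p : α → Prop}
    (h : ∀ a b, r a b → p b → p a ∧ r' a b) {a b : α} (hab : ReflTransGen r a b) (hb : p b) :
    ReflTransGen r' a b := by
  induction hab with
  | refl => exact .refl
  | tail _ hcb ih =>
    obtain ⟨hc, hcb'⟩ := h _ _ hcb hb
    exact (ih hc).tail hcb'

end Relation

open Relation Finset

namespace PNet

section Degrees

variable {N M : PNet} {u v : ℕ} {s : Finset ℕ}

lemma filter_verts_eq {p : ℕ → Prop} [DecidablePred p] (hp : ∀ w, p w → w ∈ N.verts)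
    (h : ∀ w, p w ↔ w ∈ s) : N.verts.filter p = s := by
  ext w
  rw [mem_filter, ← h]
  exact ⟨And.right, fun hw => ⟨hp w hw, hw⟩⟩

lemma card_filter_verts_eq_zero_iff {p : ℕ → Prop} [DecidablePred p]
    (hp : ∀ w, p w → w ∈ N.verts) : (N.verts.filter p).card = 0 ↔ ∀ w, ¬ p w := by
  rw [card_eq_zero, filter_eq_empty_iff]
  exact ⟨fun h w hw => h (hp w hw) hw, fun h w _ => h w⟩

lemma card_filter_verts_eq_one_iff {p : ℕ → Prop} [DecidablePred p]
    (hp : ∀ w, p w → w ∈ N.verts) : (N.verts.filter p).card = 1 ↔ ∃ a, ∀ w, p w ↔ w = a := by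
  refine ⟨fun h => ?_, fun ⟨a, ha⟩ => ?_⟩
  · obtain ⟨a, ha⟩ := card_eq_one.1 h
    exact ⟨a, fun w => by rw [← mem_singleton, ← ha, mem_filter, and_iff_right_of_imp (hp w)]⟩
  · rw [filter_verts_eq hp (s := {a}) (by simpa using ha), card_singleton]

lemma card_filter_verts_eq_two_iff {p : ℕ → Prop} [DecidablePred p]
    (hp : ∀ w, p w → w ∈ N.verts) :
    (N.verts.filter p).card = 2 ↔ ∃ a b, a ≠ b ∧ ∀ w, p w ↔ w = a ∨ w = b := by
  refine ⟨fun h => ?_, fun ⟨a, b, hab, h⟩ => ?_⟩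
  · obtain ⟨a, b, hab, h⟩ := card_eq_two.1 h
    refine ⟨a, b, hab, fun w => ?_⟩
    have := mem_filter (s := N.verts) (p := p) (a := w)
    rw [h, and_iff_right_of_imp (hp w)] at this
    simpa using this.symm
  · rw [filter_verts_eq hp (s := {a, b}) (by simpa using h), card_pair hab]

lemma outdeg_eq_card (h : ∀ w, N.adj v w ↔ w ∈ s) : N.outdeg v = s.card :=
  congrArg card (filter_verts_eq (fun w hw => (N.adj_mem v w hw).2) h)

lemma indeg_eq_card (h : ∀ w, N.adj w v ↔ w ∈ s) : N.indeg v = s.card :=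
  congrArg card (filter_verts_eq (fun w hw => (N.adj_mem w v hw).1) h)

lemma outdeg_eq_zero_iff : N.outdeg v = 0 ↔ ∀ w, ¬ N.adj v w :=
  card_filter_verts_eq_zero_iff fun w hw => (N.adj_mem v w hw).2

lemma outdeg_eq_one_iff : N.outdeg v = 1 ↔ ∃ a, ∀ w, N.adj v w ↔ w = a :=
  card_filter_verts_eq_one_iff fun w hw => (N.adj_mem v w hw).2

lemma outdeg_eq_two_iff : N.outdeg v = 2 ↔ ∃ a b, a ≠ b ∧ ∀ w, N.adj v w ↔ w = a ∨ w = b :=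
  card_filter_verts_eq_two_iff fun w hw => (N.adj_mem v w hw).2

lemma indeg_eq_zero_iff : N.indeg v = 0 ↔ ∀ w, ¬ N.adj w v :=
  card_filter_verts_eq_zero_iff fun w hw => (N.adj_mem w v hw).1

lemma indeg_eq_one_iff : N.indeg v = 1 ↔ ∃ a, ∀ w, N.adj w v ↔ w = a :=
  card_filter_verts_eq_one_iff fun w hw => (N.adj_mem w v hw).1

lemma indeg_eq_two_iff : N.indeg v = 2 ↔ ∃ a b, a ≠ b ∧ ∀ w, N.adj w v ↔ w = a ∨ w = b :=
  card_filter_verts_eq_two_iff fun w hw => (N.adj_mem w v hw).1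

lemma outdeg_eq_zero_of_notMem (hv : v ∉ N.verts) : N.outdeg v = 0 :=
  outdeg_eq_zero_iff.2 fun w hw => hv (N.adj_mem v w hw).1

lemma outdeg_congr_s7 (h : ∀ w, M.adj v w ↔ N.adj v w) : M.outdeg v = N.outdeg v :=
  outdeg_eq_card fun w => (h w).trans (by simpa using fun hw => (N.adj_mem v w hw).2)

lemma indeg_congr_s7 (h : ∀ w, M.adj w v ↔ N.adj w v) : M.indeg v = N.indeg v :=
  indeg_eq_card fun w => (h w).trans (by simpa using fun hw => (N.adj_mem w v hw).1)

lemma outdeg_le_outdeg (h : ∀ w, M.adj v w → N.adj v w) : M.outdeg v ≤ N.outdeg v :=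
  card_le_card fun w hw =>
    mem_filter.2 ⟨(N.adj_mem v w (h w (mem_filter.1 hw).2)).2, h w (mem_filter.1 hw).2⟩

end Degrees

structure IsBinaryAt (N : PNet) (ρ : ℕ) : Prop where
  acyclic : N.Acyclic
  isRoot : N.IsRoot ρ
  outdeg_root : N.outdeg ρ = 2
  reach : ∀ v ∈ N.verts, ReflTransGen N.adj ρ v
  degrees : ∀ v ∈ N.verts, v ≠ ρ →
    (N.indeg v = 1 ∧ N.outdeg v = 2) ∨ (N.indeg v = 2 ∧ N.outdeg v = 1) ∨
      (N.indeg v = 1 ∧ N.outdeg v = 0)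

lemma isBinary_iff_exists_isBinaryAt {N : PNet} : N.IsBinary ↔ ∃ ρ, N.IsBinaryAt ρ :=
  ⟨fun ⟨hac, ρ, h₁, h₂, h₃, h₄⟩ => ⟨ρ, hac, h₁, h₂, h₃, h₄⟩,
    fun ⟨ρ, h⟩ => ⟨h.1, ρ, h.2, h.3, h.4, h.5⟩⟩

namespace IsBinaryAt

variable {N : PNet} {ρ u p q : ℕ}

lemma indeg_eq_one_of_outdeg_eq_zero (hN : N.IsBinaryAt ρ) (hu : u ∈ N.verts)
    (h₀ : N.outdeg u = 0) : N.indeg u = 1 := by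
  have hρ : u ≠ ρ := by rintro rfl; rw [hN.outdeg_root] at h₀; omega
  rcases hN.degrees u hu hρ with h | h | h <;> omega

lemma eq_of_adj_of_adj (hN : N.IsBinaryAt ρ) (h₀ : N.outdeg u = 0) (hp : N.adj p u)
    (hq : N.adj q u) : q = p := by
  obtain ⟨a, ha⟩ :=
    indeg_eq_one_iff.1 (hN.indeg_eq_one_of_outdeg_eq_zero (N.adj_mem p u hp).2 h₀)
  exact ((ha q).1 hq).trans ((ha p).1 hp).symm

end IsBinaryAt

lemma Acyclic.exists_maximal_s7 {N : PNet} (hN : N.Acyclic) {S : Finset ℕ} (hS : S.Nonempty) :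
    ∃ v ∈ S, ∀ t ∈ S, ¬ TransGen N.adj v t := by
  classical
  obtain ⟨v, hv, hmin⟩ := S.exists_min_image (fun v => (S.filter (TransGen N.adj v ·)).card) hS
  refine ⟨v, hv, fun t ht hvt => (hmin t ht).not_gt (card_lt_card ?_)⟩
  refine (ssubset_iff_of_subset fun s hs => ?_).2 ⟨t, mem_filter.2 ⟨ht, hvt⟩, fun h => ?_⟩
  · exact mem_filter.2 ⟨(mem_filter.1 hs).1, hvt.trans (mem_filter.1 hs).2⟩
  · exact hN t (mem_filter.1 h).2

lemma Acyclic.of_adj_imp {N M : PNet} (hN : N.Acyclic)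
    (h : ∀ a b, M.adj a b → N.adj a b ∨ ∀ c, ¬ M.adj b c) : M.Acyclic := by
  have key : ∀ a b, TransGen M.adj a b → TransGen N.adj a b ∨ ∀ c, ¬ M.adj b c := by
    intro a b hab
    induction hab with
    | single hab => exact (h _ _ hab).imp .single id
    | tail _ hbc ih =>
      rcases ih with ih | ih
      · exact (h _ _ hbc).imp ih.tail id
      · exact absurd hbc (ih _)
  intro a ha
  obtain ⟨c, hac, -⟩ := TransGen.head'_iff.1 ha
  exact (key a a ha).elim (hN a) (· c hac)

def numEdges (N : PNet) : ℕ := ∑ v ∈ N.verts, N.outdeg v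

lemma numEdges_eq_sum_of_subset {N : PNet} {s : Finset ℕ} (h : N.verts ⊆ s) :
    N.numEdges = ∑ v ∈ s, N.outdeg v :=
  sum_subset h fun _ _ hv => outdeg_eq_zero_of_notMem hv

lemma numEdges_lt_of_outdeg_le {M N : PNet} {v : ℕ} (hle : ∀ u, M.outdeg u ≤ N.outdeg u)
    (hlt : M.outdeg v < N.outdeg v) : M.numEdges < N.numEdges := by
  rw [numEdges_eq_sum_of_subset (subset_union_left (s₂ := N.verts)),
    numEdges_eq_sum_of_subset (subset_union_right (s₁ := M.verts))]
  have hv : v ∈ N.verts := by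
    by_contra hv
    rw [outdeg_eq_zero_of_notMem hv] at hlt
    omega
  exact sum_lt_sum (fun u _ => hle u) ⟨v, mem_union_right _ hv, hlt⟩

def eraseVerts (N : PNet) (s : Finset ℕ) : PNet where
  verts := N.verts \ s
  adj a b := N.adj a b ∧ a ∉ s ∧ b ∉ s
  adjDec _ _ := inferInstance
  adj_mem a b h :=
    ⟨mem_sdiff.2 ⟨(N.adj_mem a b h.1).1, h.2.1⟩, mem_sdiff.2 ⟨(N.adj_mem a b h.1).2, h.2.2⟩⟩

section eraseVerts

variable {N : PNet} {s : Finset ℕ} {u : ℕ}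

lemma eraseVerts_adj_iff (hs : ∀ c ∈ s, N.outdeg c = 0) {a b : ℕ} :
    (N.eraseVerts s).adj a b ↔ N.adj a b ∧ b ∉ s :=
  ⟨fun h => ⟨h.1, h.2.2⟩, fun h => ⟨h.1, fun ha => outdeg_eq_zero_iff.1 (hs a ha) b h.1, h.2⟩⟩

lemma indeg_eraseVerts (hs : ∀ c ∈ s, N.outdeg c = 0) (hu : u ∉ s) :
    (N.eraseVerts s).indeg u = N.indeg u :=
  indeg_congr_s7 fun _ => (eraseVerts_adj_iff hs).trans (and_iff_left hu)

lemma outdeg_eraseVerts (hs : ∀ c ∈ s, N.outdeg c = 0) (hu : ∀ c ∈ s, ¬ N.adj u c) :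
    (N.eraseVerts s).outdeg u = N.outdeg u :=
  outdeg_congr_s7 fun c => (eraseVerts_adj_iff hs).trans
    ⟨And.left, fun hc => ⟨hc, fun hcs => hu c hcs hc⟩⟩

lemma outdeg_eraseVerts_eq_zero (hu : ∀ c, N.adj u c → c ∈ s) :
    (N.eraseVerts s).outdeg u = 0 :=
  outdeg_eq_zero_iff.2 fun c hc => hc.2.2 (hu c hc.1)

lemma outdeg_eraseVerts_le : (N.eraseVerts s).outdeg u ≤ N.outdeg u :=
  outdeg_le_outdeg fun _ h => h.1

lemma acyclic_eraseVerts (hN : N.Acyclic) : (N.eraseVerts s).Acyclic :=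
  hN.of_adj_imp fun _ _ h => .inl h.1

lemma reflTransGen_eraseVerts (hs : ∀ c ∈ s, N.outdeg c = 0) {a b : ℕ}
    (hab : ReflTransGen N.adj a b) (hb : b ∉ s) : ReflTransGen (N.eraseVerts s).adj a b :=
  hab.of_backward_closed (fun a b h hb =>
    ⟨fun ha => outdeg_eq_zero_iff.1 (hs a ha) b h, (eraseVerts_adj_iff hs).2 ⟨h, hb⟩⟩) hb

end eraseVerts

lemma numEdges_eraseVerts_lt {N : PNet} {s : Finset ℕ} {u : ℕ} (hu : ∀ c, N.adj u c → c ∈ s)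
    (hu₀ : N.outdeg u ≠ 0) : (N.eraseVerts s).numEdges < N.numEdges :=
  numEdges_lt_of_outdeg_le (fun _ => outdeg_eraseVerts_le)
    (by rw [outdeg_eraseVerts_eq_zero hu]; omega)

section Cherry

variable {N : PNet} {ρ v c₁ c₂ : ℕ}

lemma speciation_eraseVerts_pair (hN : N.IsBinaryAt ρ) (hv : ∀ w, N.adj v w ↔ w = c₁ ∨ w = c₂)
    (hne : c₁ ≠ c₂) (hc₁ : N.outdeg c₁ = 0) (hc₂ : N.outdeg c₂ = 0) :
    Speciation (N.eraseVerts {c₁, c₂}) N := by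
  have hs : ∀ c ∈ ({c₁, c₂} : Finset ℕ), N.outdeg c = 0 := by simp [hc₁, hc₂]
  have hvc₁ : N.adj v c₁ := (hv c₁).2 (.inl rfl)
  have hvc₂ : N.adj v c₂ := (hv c₂).2 (.inr rfl)
  have hvs : v ∉ ({c₁, c₂} : Finset ℕ) := fun h => outdeg_eq_zero_iff.1 (hs v h) c₁ hvc₁
  refine ⟨v, c₁, c₂, ⟨mem_sdiff.2 ⟨(N.adj_mem v c₁ hvc₁).1, hvs⟩, ?_⟩, by simp [eraseVerts],
    by simp [eraseVerts], hne, ?_, fun a b => ?_⟩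
  · exact outdeg_eraseVerts_eq_zero fun c hc => by simpa using (hv c).1 hc
  · have h₁ := (N.adj_mem v c₁ hvc₁).2
    have h₂ := (N.adj_mem v c₂ hvc₂).2
    ext u
    simp only [eraseVerts, mem_insert, mem_sdiff, mem_singleton]
    constructor
    · tauto
    · rintro (rfl | rfl | ⟨hu, -⟩) <;> assumption
  · rw [eraseVerts_adj_iff hs]
    simp only [mem_insert, mem_singleton, not_or]
    constructor
    · intro hab
      by_cases hb₁ : b = c₁
      · subst hb₁; exact .inr (.inl ⟨hN.eq_of_adj_of_adj hc₁ hvc₁ hab, rfl⟩)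
      by_cases hb₂ : b = c₂
      · subst hb₂; exact .inr (.inr ⟨hN.eq_of_adj_of_adj hc₂ hvc₂ hab, rfl⟩)
      exact .inl ⟨hab, hb₁, hb₂⟩
    · rintro (⟨hab, -⟩ | ⟨rfl, rfl⟩ | ⟨rfl, rfl⟩) <;> assumption

lemma singleLeaf_eraseVerts_pair (hN : N.IsBinaryAt ρ) (hρ : ∀ w, N.adj ρ w ↔ w = c₁ ∨ w = c₂)
    (hleaf : ∀ u ∈ N.verts, u ≠ ρ → N.outdeg u = 0) : SingleLeaf (N.eraseVerts {c₁, c₂}) := by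
  have hsrc : ∀ a b, N.adj a b → b = c₁ ∨ b = c₂ := by
    intro a b hab
    obtain rfl : a = ρ := by
      by_contra ha
      exact outdeg_eq_zero_iff.1 (hleaf a (N.adj_mem a b hab).1 ha) b hab
    exact (hρ b).1 hab
  refine ⟨ρ, ?_, fun a b hab => by simpa using hab.2.2 (by simpa using hsrc a b hab.1)⟩
  ext u
  simp only [eraseVerts, mem_sdiff, mem_insert, mem_singleton, not_or]
  constructor
  · rintro ⟨hu, hu₁, hu₂⟩
    by_contra huρ
    obtain ⟨a, -, hau⟩ := (hN.reach u hu).cases_tail.resolve_left huρ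
    exact (hsrc a u hau).elim hu₁ hu₂
  · rintro hu
    rw [hu]
    have hρρ : ∀ c, N.adj ρ c → ρ ≠ c := fun c hc h => hN.acyclic ρ (.single (h ▸ hc))
    exact ⟨hN.isRoot.1, hρρ c₁ ((hρ c₁).2 (.inl rfl)), hρρ c₂ ((hρ c₂).2 (.inr rfl))⟩

lemma isBinaryAt_eraseVerts_pair (hN : N.IsBinaryAt ρ) (hv : ∀ w, N.adj v w ↔ w = c₁ ∨ w = c₂)
    (hne : c₁ ≠ c₂) (hc₁ : N.outdeg c₁ = 0) (hc₂ : N.outdeg c₂ = 0) (hvρ : v ≠ ρ) :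
    (N.eraseVerts {c₁, c₂}).IsBinaryAt ρ := by
  have hs : ∀ c ∈ ({c₁, c₂} : Finset ℕ), N.outdeg c = 0 := by simp [hc₁, hc₂]
  have hvc₁ : N.adj v c₁ := (hv c₁).2 (.inl rfl)
  have hvc₂ : N.adj v c₂ := (hv c₂).2 (.inr rfl)
  have hout : ∀ u ≠ v, (N.eraseVerts {c₁, c₂}).outdeg u = N.outdeg u := fun u hu =>
    outdeg_eraseVerts hs (by simpa using ⟨fun h => hu (hN.eq_of_adj_of_adj hc₁ hvc₁ h),
      fun h => hu (hN.eq_of_adj_of_adj hc₂ hvc₂ h)⟩)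
  have hρs : ρ ∉ ({c₁, c₂} : Finset ℕ) := fun h => by
    have := hs ρ h
    rw [hN.outdeg_root] at this
    omega
  have hv₁ : N.indeg v = 1 := by
    have := outdeg_eq_two_iff.2 ⟨c₁, c₂, hne, hv⟩
    rcases hN.degrees v (N.adj_mem v c₁ hvc₁).1 hvρ with h | h | h <;> omega
  refine ⟨acyclic_eraseVerts hN.acyclic,
    ⟨mem_sdiff.2 ⟨hN.isRoot.1, hρs⟩, (indeg_eraseVerts hs hρs).trans hN.isRoot.2⟩,
    (hout ρ hvρ.symm).trans hN.outdeg_root,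
    fun w hw => reflTransGen_eraseVerts hs (hN.reach w (mem_sdiff.1 hw).1) (mem_sdiff.1 hw).2,
    fun w hw hwρ => ?_⟩
  obtain ⟨hwN, hws⟩ := mem_sdiff.1 hw
  rw [indeg_eraseVerts hs hws]
  by_cases hwv : w = v
  · subst hwv
    exact .inr (.inr ⟨hv₁, outdeg_eraseVerts_eq_zero fun c hc => by simpa using (hv c).1 hc⟩)
  · rw [hout w hwv]
    exact hN.degrees w hwN hwρ

end Cherry

def redirect (N : PNet) (p v y : ℕ) : PNet where
  verts := insert y N.verts
  adj a b := (N.adj a b ∧ ¬ (a = p ∧ b = v)) ∨ (a = p ∧ b = y ∧ N.adj p v)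
  adjDec _ _ := inferInstance
  adj_mem a b h := by
    rcases h with ⟨h, -⟩ | ⟨rfl, rfl, h⟩
    · exact ⟨mem_insert_of_mem (N.adj_mem _ _ h).1, mem_insert_of_mem (N.adj_mem _ _ h).2⟩
    · exact ⟨mem_insert_of_mem (N.adj_mem _ _ h).1, mem_insert_self _ _⟩

/-- Undoes a y-type merging event at the reticulation `v` above the leaf `z`: the edge from
`p` to `v` becomes the pendant edge of the new leaf `y`. -/
def splitReticulation (N : PNet) (p v z y : ℕ) : PNet := (N.eraseVerts {z}).redirect p v y

structure ReticulatedLeaf (N : PNet) (p₁ p₂ v z : ℕ) : Prop where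
  parents : ∀ u, N.adj u v ↔ u = p₁ ∨ u = p₂
  parents_ne : p₁ ≠ p₂
  child : ∀ w, N.adj v w ↔ w = z
  leaf_parent : ∀ u, N.adj u z ↔ u = v
  outdeg_leaf : N.outdeg z = 0

namespace ReticulatedLeaf

variable {N : PNet} {ρ p₁ p₂ v z y u w a b : ℕ}

lemma adj_left (h : N.ReticulatedLeaf p₁ p₂ v z) : N.adj p₁ v := (h.parents p₁).2 (.inl rfl)

lemma adj_right (h : N.ReticulatedLeaf p₁ p₂ v z) : N.adj p₂ v := (h.parents p₂).2 (.inr rfl)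

lemma adj_child (h : N.ReticulatedLeaf p₁ p₂ v z) : N.adj v z := (h.child z).2 rfl

lemma not_adj_leaf (h : N.ReticulatedLeaf p₁ p₂ v z) (w : ℕ) : ¬ N.adj z w :=
  outdeg_eq_zero_iff.1 h.outdeg_leaf w

lemma ne_leaf (h : N.ReticulatedLeaf p₁ p₂ v z) : v ≠ z := fun hv =>
  h.not_adj_leaf z (hv ▸ h.adj_child)

lemma ne_of_adj (h : N.ReticulatedLeaf p₁ p₂ v z) (hu : N.adj u v) : u ≠ v ∧ u ≠ z :=
  ⟨fun hu' => h.ne_leaf ((h.child v).1 (hu' ▸ hu)), fun hu' => h.not_adj_leaf v (hu' ▸ hu)⟩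

lemma splitReticulation_adj_iff (h : N.ReticulatedLeaf p₁ p₂ v z) :
    (N.splitReticulation p₂ v z y).adj a b ↔
      (N.adj a b ∧ b ≠ z ∧ ¬ (a = p₂ ∧ b = v)) ∨ (a = p₂ ∧ b = y) := by
  simp only [splitReticulation, redirect, eraseVerts, mem_singleton]
  constructor
  · rintro (⟨⟨hab, -, hb⟩, hne⟩ | ⟨rfl, rfl, -⟩)
    exacts [.inl ⟨hab, hb, hne⟩, .inr ⟨rfl, rfl⟩]
  · rintro (⟨hab, hb, hne⟩ | ⟨rfl, rfl⟩)
    · exact .inl ⟨⟨hab, fun ha => h.not_adj_leaf b (ha ▸ hab), hb⟩, hne⟩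
    · exact .inr ⟨rfl, rfl, h.adj_right, (h.ne_of_adj h.adj_right).2, h.ne_leaf⟩

lemma outdeg_splitReticulation_of_ne (h : N.ReticulatedLeaf p₁ p₂ v z) (hy : y ∉ N.verts)
    (hu : u ≠ v) : (N.splitReticulation p₂ v z y).outdeg u = N.outdeg u := by
  by_cases hu₂ : u = p₂
  · subst hu₂
    set s := N.verts.filter (N.adj u ·)
    have hvs : v ∈ s := mem_filter.2 ⟨(N.adj_mem _ _ h.adj_right).2, h.adj_right⟩
    have hys : y ∉ s.erase v := fun hy' => hy (mem_filter.1 (mem_of_mem_erase hy')).1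
    rw [outdeg_eq_card (s := insert y (s.erase v)), card_insert_of_notMem hys,
      card_erase_add_one hvs]
    · rfl
    intro t
    rw [h.splitReticulation_adj_iff, mem_insert, mem_erase, mem_filter]
    constructor
    · rintro (⟨ht, -, htv⟩ | ⟨-, rfl⟩)
      exacts [.inr ⟨fun h' => htv ⟨rfl, h'⟩, (N.adj_mem _ _ ht).2, ht⟩, .inl rfl]
    · rintro (rfl | ⟨htv, -, ht⟩)
      · exact .inr ⟨rfl, rfl⟩
      · exact .inl ⟨ht, fun htz => hu ((h.leaf_parent u).1 (htz ▸ ht)), fun h' => htv h'.2⟩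
  · refine outdeg_congr_s7 fun t => h.splitReticulation_adj_iff.trans ?_
    simp only [hu₂, false_and, not_false_eq_true, and_true, or_false]
    exact ⟨And.left, fun ht => ⟨ht, fun htz => hu ((h.leaf_parent u).1 (htz ▸ ht))⟩⟩

lemma outdeg_splitReticulation_self (h : N.ReticulatedLeaf p₁ p₂ v z) :
    (N.splitReticulation p₂ v z y).outdeg v = 0 := by
  refine outdeg_eq_zero_iff.2 fun b hb => ?_
  rcases h.splitReticulation_adj_iff.1 hb with ⟨hvb, hbz, -⟩ | ⟨hv, -⟩
  exacts [hbz ((h.child b).1 hvb), (h.ne_of_adj h.adj_right).1 hv.symm]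

lemma outdeg_splitReticulation_new (h : N.ReticulatedLeaf p₁ p₂ v z) (hy : y ∉ N.verts) :
    (N.splitReticulation p₂ v z y).outdeg y = 0 :=
  (h.outdeg_splitReticulation_of_ne hy
    (ne_of_mem_of_not_mem (N.adj_mem _ _ h.adj_child).1 hy).symm).trans
    (outdeg_eq_zero_of_notMem hy)

lemma indeg_splitReticulation_of_ne (h : N.ReticulatedLeaf p₁ p₂ v z) (hwv : w ≠ v)
    (hwy : w ≠ y) (hwz : w ≠ z) : (N.splitReticulation p₂ v z y).indeg w = N.indeg w :=
  indeg_congr_s7 fun a => h.splitReticulation_adj_iff.trans (by simp [hwv, hwy, hwz])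

lemma indeg_splitReticulation_self (h : N.ReticulatedLeaf p₁ p₂ v z) (hy : y ∉ N.verts) :
    (N.splitReticulation p₂ v z y).indeg v = 1 := by
  have hvy : v ≠ y := ne_of_mem_of_not_mem (N.adj_mem _ _ h.adj_child).1 hy
  refine indeg_eq_one_iff.2 ⟨p₁, fun a => h.splitReticulation_adj_iff.trans ?_⟩
  simp only [h.parents, hvy, h.ne_leaf, and_true, and_false, or_false, ne_eq, not_false_eq_true,
    true_and]
  constructor
  · rintro ⟨rfl | rfl, ha⟩
    exacts [rfl, absurd rfl ha]
  · rintro rfl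
    exact ⟨.inl rfl, h.parents_ne⟩

lemma indeg_splitReticulation_new (h : N.ReticulatedLeaf p₁ p₂ v z) (hy : y ∉ N.verts) :
    (N.splitReticulation p₂ v z y).indeg y = 1 :=
  indeg_eq_one_iff.2 ⟨p₂, fun _ => h.splitReticulation_adj_iff.trans
    ⟨fun ha => ha.elim (fun ha => absurd (N.adj_mem _ _ ha.1).2 hy) And.left,
      fun ha => .inr ⟨ha, rfl⟩⟩⟩

lemma yMerge_splitReticulation (h : N.ReticulatedLeaf p₁ p₂ v z) (hy : y ∉ N.verts) :
    YMerge (N.splitReticulation p₂ v z y) N := by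
  have hvN := (N.adj_mem _ _ h.adj_child).1
  have hzN := (N.adj_mem _ _ h.adj_child).2
  refine ⟨v, y, z, p₁, p₂, ne_of_mem_of_not_mem hvN hy,
    ⟨mem_insert_of_mem (mem_sdiff.2 ⟨hvN, by simpa using h.ne_leaf⟩),
      h.outdeg_splitReticulation_self⟩,
    ⟨mem_insert_self _ _, h.outdeg_splitReticulation_new hy⟩, ?_,
    h.splitReticulation_adj_iff.2 (.inl ⟨h.adj_left, h.ne_leaf, fun h' => h.parents_ne h'.1⟩),
    h.splitReticulation_adj_iff.2 (.inr ⟨rfl, rfl⟩), h.parents_ne, ?_, fun a b => ?_⟩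
  · simp [splitReticulation, redirect, eraseVerts, ne_of_mem_of_not_mem hzN hy]
  · ext u
    simp only [splitReticulation, redirect, eraseVerts, mem_insert, mem_sdiff, mem_singleton]
    constructor
    · intro hu
      by_cases huz : u = z
      · exact .inl huz
      · exact .inr ⟨.inr ⟨hu, huz⟩, fun huy => hy (huy ▸ hu)⟩
    · rintro (rfl | ⟨rfl | ⟨hu, -⟩, huy⟩)
      exacts [hzN, absurd rfl huy, hu]
  · rw [h.splitReticulation_adj_iff]
    constructor
    · intro hab
      by_cases hbz : b = z
      · exact .inr (.inr ⟨(h.leaf_parent a).1 (hbz ▸ hab), hbz⟩)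
      by_cases hav : a = p₂ ∧ b = v
      · exact .inr (.inl hav)
      exact .inl ⟨.inl ⟨hab, hbz, hav⟩, fun hby => hy (hby ▸ (N.adj_mem _ _ hab).2)⟩
    · rintro (⟨⟨hab, -⟩ | ⟨-, rfl⟩, hby⟩ | ⟨rfl, rfl⟩ | ⟨rfl, rfl⟩)
      exacts [hab, absurd rfl hby, h.adj_right, h.adj_child]

lemma reach_splitReticulation (hN : N.IsBinaryAt ρ) (h : N.ReticulatedLeaf p₁ p₂ v z)
    (hw : w ∈ (N.splitReticulation p₂ v z y).verts) :
    ReflTransGen (N.splitReticulation p₂ v z y).adj ρ w := by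
  have hgood : ∀ b ∈ N.verts, b ≠ z → b ≠ v →
      ReflTransGen (N.splitReticulation p₂ v z y).adj ρ b := fun b hb hbz hbv =>
    (hN.reach b hb).of_backward_closed (p := fun b => b ≠ z ∧ b ≠ v)
      (fun a b hab ⟨hbz, hbv⟩ =>
        ⟨⟨fun ha => h.not_adj_leaf b (ha ▸ hab), fun ha => hbz ((h.child b).1 (ha ▸ hab))⟩,
          h.splitReticulation_adj_iff.2 (.inl ⟨hab, hbz, fun h' => hbv h'.2⟩)⟩) ⟨hbz, hbv⟩
  have hparent : ∀ p, N.adj p v → ReflTransGen (N.splitReticulation p₂ v z y).adj ρ p :=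
    fun p hp => hgood p (N.adj_mem _ _ hp).1 (h.ne_of_adj hp).2 (h.ne_of_adj hp).1
  rcases mem_insert.1 hw with rfl | hw
  · exact (hparent p₂ h.adj_right).tail (h.splitReticulation_adj_iff.2 (.inr ⟨rfl, rfl⟩))
  obtain ⟨hwN, hwz⟩ := mem_sdiff.1 hw
  by_cases hwv : w = v
  · subst hwv
    exact (hparent p₁ h.adj_left).tail (h.splitReticulation_adj_iff.2
      (.inl ⟨h.adj_left, h.ne_leaf, fun h' => h.parents_ne h'.1⟩))
  · exact hgood w hwN (by simpa using hwz) hwv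

lemma isBinaryAt_splitReticulation (hN : N.IsBinaryAt ρ) (h : N.ReticulatedLeaf p₁ p₂ v z)
    (hy : y ∉ N.verts) : (N.splitReticulation p₂ v z y).IsBinaryAt ρ := by
  have hnot : ∀ c, ¬ N.adj c ρ := indeg_eq_zero_iff.1 hN.isRoot.2
  have hρv : ρ ≠ v := fun hρ => hnot p₁ (hρ ▸ h.adj_left)
  have hρz : ρ ≠ z := fun hρ => hnot v (hρ ▸ h.adj_child)
  have hρy : ρ ≠ y := fun hρ => hy (hρ ▸ hN.isRoot.1)
  refine ⟨hN.acyclic.of_adj_imp fun a b hab => ?_,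
    ⟨mem_insert_of_mem (mem_sdiff.2 ⟨hN.isRoot.1, by simpa using hρz⟩),
      (h.indeg_splitReticulation_of_ne hρv hρy hρz).trans hN.isRoot.2⟩,
    (h.outdeg_splitReticulation_of_ne hy hρv).trans hN.outdeg_root,
    fun w hw => reach_splitReticulation hN h hw, fun w hw hwρ => ?_⟩
  · rcases h.splitReticulation_adj_iff.1 hab with hab | ⟨-, rfl⟩
    exacts [.inl hab.1, .inr (outdeg_eq_zero_iff.1 (h.outdeg_splitReticulation_new hy))]
  rcases mem_insert.1 hw with rfl | hw
  · exact .inr (.inr ⟨h.indeg_splitReticulation_new hy, h.outdeg_splitReticulation_new hy⟩)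
  obtain ⟨hwN, hwz⟩ := mem_sdiff.1 hw
  by_cases hwv : w = v
  · subst hwv
    exact .inr (.inr ⟨h.indeg_splitReticulation_self hy, h.outdeg_splitReticulation_self⟩)
  rw [h.indeg_splitReticulation_of_ne hwv (ne_of_mem_of_not_mem hwN hy) (by simpa using hwz),
    h.outdeg_splitReticulation_of_ne hy hwv]
  exact hN.degrees w hwN hwρ

lemma numEdges_splitReticulation_lt (h : N.ReticulatedLeaf p₁ p₂ v z) (hy : y ∉ N.verts) :
    (N.splitReticulation p₂ v z y).numEdges < N.numEdges := by
  refine numEdges_lt_of_outdeg_le (v := v) (fun u => ?_) ?_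
  · by_cases hu : u = v
    · rw [hu, h.outdeg_splitReticulation_self]
      exact Nat.zero_le _
    · exact (h.outdeg_splitReticulation_of_ne hy hu).le
  · rw [h.outdeg_splitReticulation_self, outdeg_eq_one_iff.2 ⟨z, h.child⟩]
    exact Nat.one_pos

end ReticulatedLeaf

namespace IsBinaryAt

variable {N : PNet} {ρ : ℕ}

lemma exists_internal_forall_children_leaf (hN : N.IsBinaryAt ρ) :
    ∃ v ∈ N.verts, N.outdeg v ≠ 0 ∧ (∀ w, N.adj v w → N.outdeg w = 0) ∧
      (v = ρ → ∀ u ∈ N.verts, u ≠ ρ → N.outdeg u = 0) := by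
  classical
  obtain ⟨v, hvS, hmax⟩ := hN.acyclic.exists_maximal_s7 (S := N.verts.filter (N.outdeg · ≠ 0))
    ⟨ρ, mem_filter.2 ⟨hN.isRoot.1, by rw [hN.outdeg_root]; omega⟩⟩
  have hbelow : ∀ u ∈ N.verts, TransGen N.adj v u → N.outdeg u = 0 := fun u hu hvu => by
    by_contra h
    exact hmax u (mem_filter.2 ⟨hu, h⟩) hvu
  obtain ⟨hv, hv₀⟩ := mem_filter.1 hvS
  refine ⟨v, hv, hv₀, fun w hw => hbelow w (N.adj_mem v w hw).2 (.single hw), ?_⟩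
  rintro rfl u hu huv
  exact hbelow u hu ((reflTransGen_iff_eq_or_transGen.1 (hN.reach u hu)).resolve_left huv)

lemma exists_predecessor (hN : N.IsBinaryAt ρ) :
    (∃ N₀, SingleLeaf N₀ ∧ Speciation N₀ N) ∨
      ∃ P, P.IsBinary ∧ P.numEdges < N.numEdges ∧ (Speciation P N ∨ YMerge P N) := by
  obtain ⟨v, hv, hv₀, hleaf, hroot⟩ := hN.exists_internal_forall_children_leaf
  have htype : N.outdeg v = 2 ∨ N.indeg v = 2 ∧ N.outdeg v = 1 := by
    by_cases hvρ : v = ρ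
    · exact .inl (hvρ ▸ hN.outdeg_root)
    rcases hN.degrees v hv hvρ with h | h | h
    exacts [.inl h.2, .inr h, absurd h.2 hv₀]
  rcases htype with hv₂ | ⟨hin, hout⟩
  · obtain ⟨c₁, c₂, hne, hc⟩ := outdeg_eq_two_iff.1 hv₂
    have hc₁ := hleaf c₁ ((hc c₁).2 (.inl rfl))
    have hc₂ := hleaf c₂ ((hc c₂).2 (.inr rfl))
    have hspec := speciation_eraseVerts_pair hN hc hne hc₁ hc₂
    by_cases hvρ : v = ρ
    · subst hvρ
      exact .inl ⟨_, singleLeaf_eraseVerts_pair hN hc (hroot rfl), hspec⟩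
    · exact .inr ⟨_, isBinary_iff_exists_isBinaryAt.2
        ⟨ρ, isBinaryAt_eraseVerts_pair hN hc hne hc₁ hc₂ hvρ⟩,
        numEdges_eraseVerts_lt (fun c hc' => by simpa using (hc c).1 hc') hv₀, .inl hspec⟩
  · obtain ⟨p₁, p₂, hp, hpar⟩ := indeg_eq_two_iff.1 hin
    obtain ⟨z, hz⟩ := outdeg_eq_one_iff.1 hout
    have hvz : N.adj v z := (hz z).2 rfl
    have h : N.ReticulatedLeaf p₁ p₂ v z :=
      ⟨hpar, hp, hz, fun u => ⟨fun hu => hN.eq_of_adj_of_adj (hleaf z hvz) hvz hu,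
        fun hu => hu ▸ hvz⟩, hleaf z hvz⟩
    obtain ⟨y, hy⟩ := Infinite.exists_notMem_finset N.verts
    exact .inr ⟨_, isBinary_iff_exists_isBinaryAt.2 ⟨ρ, h.isBinaryAt_splitReticulation hN hy⟩,
      h.numEdges_splitReticulation_lt hy, .inr (h.yMerge_splitReticulation hy)⟩

end IsBinaryAt

theorem IsBinary.exists_singleLeaf_reflTransGen {N : PNet} (hN : N.IsBinary) :
    ∃ N₀, SingleLeaf N₀ ∧ ReflTransGen (fun A B => Speciation A B ∨ YMerge A B) N₀ N := by
  induction hn : N.numEdges using Nat.strong_induction_on generalizing N with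
  | _ n ih =>
    obtain ⟨ρ, hρ⟩ := isBinary_iff_exists_isBinaryAt.1 hN
    rcases hρ.exists_predecessor with ⟨N₀, h₀, hspec⟩ | ⟨P, hP, hlt, hstep⟩
    · exact ⟨N₀, h₀, .single (.inl hspec)⟩
    · obtain ⟨N₀, h₀, hgen⟩ := ih _ (hn ▸ hlt) hP rfl
      exact ⟨N₀, h₀, hgen.tail hstep⟩

lemma iso_refl (N : PNet) : Iso N N := ⟨id, Set.bijOn_id _, fun _ _ _ _ => Iff.rfl⟩

end PNet

open PNet in
/-- Every binary phylogenetic network can be generated (up to isomorphism)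
from the single-leaf network by a finite sequence of speciation events and
y-type merging events. -/
theorem stmt7 (N : PNet) (hbin : N.IsBinary) :
    ∃ N₀ M, SingleLeaf N₀ ∧
      Relation.ReflTransGen (fun A B => Speciation A B ∨ YMerge A B) N₀ M ∧
      Iso M N := by
  obtain ⟨N₀, h₀, hgen⟩ := hbin.exists_singleLeaf_reflTransGen
  exact ⟨N₀, N, h₀, hgen, iso_refl N⟩
end

section
/- Every binary phylogenetic network obtained from the single-leaf network by a finite sequence of speciation events and n-type (HGT) reticulation events is an orchard network. -/
/-!
Induct along the generating sequence with the invariant "a single leaf, or orchard with every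
leaf having a unique parent". Each event is undone by one reduction. A speciation at `x` with
new leaves `a, b` is undone by picking the cherry `(a, b)`: this suppresses `x`, so the result is
the previous network with `x` renamed to `a`, and orchard networks are closed under renaming. An
HGT arc `u₀ → v₀` above the leaves `x, y` is undone by picking the reticulated cherry `(y, x)`,
which returns exactly the previous network. Unique leaf parents guarantee that the suppressed
nodes have a single parent, so these reductions restore the old arcs; both events preserve the
property.
-/

namespace PNet

theorem isLeaf_iff {N : PNet} {v : ℕ} : N.IsLeaf v ↔ v ∈ N.verts ∧ ∀ w, ¬ N.adj v w := by
  simp only [IsLeaf, outdeg, Finset.card_eq_zero, Finset.filter_eq_empty_iff]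
  exact and_congr_right fun _ => ⟨fun h w hw => h (N.adj_mem v w hw).2 hw, fun h w _ => h w⟩

theorem indeg_eq_card_s8 {N : PNet} {v : ℕ} {S : Finset ℕ} (h : ∀ u, N.adj u v ↔ u ∈ S) :
    N.indeg v = S.card := by
  rw [indeg]
  congr 1
  ext u
  rw [Finset.mem_filter, ← h]
  exact and_iff_right_of_imp fun hu => (N.adj_mem u v hu).1

def relabel (N : PNet) (π : Equiv.Perm ℕ) : PNet where
  verts := N.verts.map π.toEmbedding
  adj u v := N.adj (π.symm u) (π.symm v)
  adjDec _ _ := N.adjDec _ _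
  adj_mem u v h := by
    simpa [Finset.mem_map_equiv] using N.adj_mem _ _ h

section relabel

variable (N : PNet) (π : Equiv.Perm ℕ)

theorem mem_relabel {v : ℕ} : v ∈ (N.relabel π).verts ↔ π.symm v ∈ N.verts :=
  Finset.mem_map_equiv

theorem relabel_adj {u v : ℕ} : (N.relabel π).adj u v ↔ N.adj (π.symm u) (π.symm v) := Iff.rfl

theorem relabel_adj_apply {u v : ℕ} : (N.relabel π).adj (π u) (π v) ↔ N.adj u v := by
  simp [relabel_adj]

theorem indeg_relabel (v : ℕ) : (N.relabel π).indeg (π v) = N.indeg v := by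
  rw [indeg_eq_card_s8 (S := (N.verts.filter fun u => N.adj u v).map π.toEmbedding)]
  · simp [indeg]
  · intro u
    simpa [Finset.mem_map_equiv, relabel_adj] using fun hu => (N.adj_mem _ v hu).1

theorem isLeaf_relabel (v : ℕ) : (N.relabel π).IsLeaf (π v) ↔ N.IsLeaf v := by
  simp only [isLeaf_iff, mem_relabel, relabel_adj, Equiv.symm_apply_apply]
  exact and_congr_right' (π.symm.surjective.forall (p := fun w => ¬ N.adj v w)).symm

end relabel

theorem relabel_verts_sdiff {A B : PNet} {S : Finset ℕ} (h : B.verts = A.verts \ S)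
    (π : Equiv.Perm ℕ) : (B.relabel π).verts = (A.relabel π).verts \ S.map π.toEmbedding := by
  simp only [relabel, h, Finset.map_sdiff]

theorem CherryPick.relabel {A B : PNet} (h : A.CherryPick B) (π : Equiv.Perm ℕ) :
    (A.relabel π).CherryPick (B.relabel π) := by
  obtain ⟨x, y, p, hxy, hx, hy, hpx, hpy, hbr⟩ := h
  refine ⟨π x, π y, π p, π.injective.ne hxy, (isLeaf_relabel A π x).2 hx,
    (isLeaf_relabel A π y).2 hy, (relabel_adj_apply A π).2 hpx, (relabel_adj_apply A π).2 hpy, ?_⟩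
  rcases hbr with ⟨hp, hV, hadj⟩ | ⟨q, hq, hV, hadj⟩
  · refine Or.inl ⟨by rwa [indeg_relabel], by simpa using relabel_verts_sdiff hV π, fun u v => ?_⟩
    simp [relabel_adj, hadj, Equiv.symm_apply_eq]
  · refine Or.inr ⟨π q, (relabel_adj_apply A π).2 hq, by simpa using relabel_verts_sdiff hV π,
      fun u v => ?_⟩
    simp [relabel_adj, hadj, Equiv.symm_apply_eq]

theorem RetCherryPick.relabel {A B : PNet} (h : A.RetCherryPick B) (π : Equiv.Perm ℕ) :
    (A.relabel π).RetCherryPick (B.relabel π) := by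
  obtain ⟨x, y, w, p, hxy, hx, hy, hwx, hw, hpw, hpy, hp, q', hq'p, hq'w, hbr⟩ := h
  refine ⟨π x, π y, π w, π p, π.injective.ne hxy, (isLeaf_relabel A π x).2 hx,
    (isLeaf_relabel A π y).2 hy, (relabel_adj_apply A π).2 hwx, by rwa [indeg_relabel],
    (relabel_adj_apply A π).2 hpw, (relabel_adj_apply A π).2 hpy, by rwa [indeg_relabel],
    π q', π.injective.ne hq'p, (relabel_adj_apply A π).2 hq'w, ?_⟩
  rcases hbr with ⟨hp, hV, hadj⟩ | ⟨q, hq, hV, hadj⟩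
  · refine Or.inl ⟨by rwa [indeg_relabel], by simpa using relabel_verts_sdiff hV π, fun u v => ?_⟩
    simp [relabel_adj, hadj, Equiv.symm_apply_eq]
  · refine Or.inr ⟨π q, (relabel_adj_apply A π).2 hq, by simpa using relabel_verts_sdiff hV π,
      fun u v => ?_⟩
    simp [relabel_adj, hadj, Equiv.symm_apply_eq]

theorem IsTrivialNet.relabel {T : PNet} (h : T.IsTrivialNet) (π : Equiv.Perm ℕ) :
    (T.relabel π).IsTrivialNet := by
  obtain ⟨r, l, hrl, hV, hadj⟩ := h
  exact ⟨π r, π l, π.injective.ne hrl, by simp [PNet.relabel, hV],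
    fun u v => by simp [relabel_adj, hadj, Equiv.symm_apply_eq]⟩

theorem Orchard.relabel {N : PNet} (h : N.Orchard) (π : Equiv.Perm ℕ) : (N.relabel π).Orchard := by
  obtain ⟨T, hT, hNT⟩ := h
  refine ⟨T.relabel π, hT.relabel π, ?_⟩
  clear hT
  induction hNT with
  | refl => rfl
  | tail _ hstep ih => exact ih.tail (hstep.imp (·.relabel π) (·.relabel π))

theorem SingleLeaf.eq_of_mem {M : PNet} (hM : M.SingleLeaf) {u v : ℕ} (hu : u ∈ M.verts)
    (hv : v ∈ M.verts) : u = v := by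
  obtain ⟨r, hr, -⟩ := hM
  rw [hr, Finset.mem_singleton] at hu hv
  rw [hu, hv]

def UniqueLeafParents (N : PNet) : Prop := ∀ l, N.IsLeaf l → ∃! q, N.adj q l

def arc (r l : ℕ) : PNet where
  verts := {r, l}
  adj u v := u = r ∧ v = l
  adjDec _ _ := instDecidableAnd
  adj_mem u v h := by simp [h.1, h.2]

theorem isTrivialNet_arc {r l : ℕ} (h : r ≠ l) : (arc r l).IsTrivialNet :=
  ⟨r, l, h, rfl, fun _ _ => Iff.rfl⟩

def IsSpeciationAt (M N : PNet) (x a b : ℕ) : Prop :=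
  M.IsLeaf x ∧ a ∉ M.verts ∧ b ∉ M.verts ∧ a ≠ b ∧
    N.verts = insert a (insert b M.verts) ∧
    ∀ u v, N.adj u v ↔ (M.adj u v ∨ (u = x ∧ v = a) ∨ (u = x ∧ v = b))

namespace IsSpeciationAt

variable {M N : PNet} {x a b : ℕ}

theorem symm (h : IsSpeciationAt M N x a b) : IsSpeciationAt M N x b a := by
  obtain ⟨hx, ha, hb, hab, hV, hA⟩ := h
  exact ⟨hx, hb, ha, hab.symm, by rw [hV, Finset.insert_comm], fun u v => by rw [hA]; tauto⟩

theorem ne_new (h : IsSpeciationAt M N x a b) : x ≠ a := by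
  obtain ⟨hx, ha, -⟩ := h
  rintro rfl
  exact ha hx.1

theorem adj_new (h : IsSpeciationAt M N x a b) : N.adj x a :=
  (h.2.2.2.2.2 x a).2 (by simp)

theorem isLeaf_new (h : IsSpeciationAt M N x a b) : N.IsLeaf a := by
  obtain ⟨hx, ha, -, -, hV, hA⟩ := h
  rw [isLeaf_iff] at hx ⊢
  exact ⟨by simp [hV], fun w hw => by grind [→ adj_mem]⟩

theorem cherryPick_relabel (h : IsSpeciationAt M N x a b) (hM : UniqueLeafParents M) :
    N.CherryPick (M.relabel (Equiv.swap x a)) := by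
  have ⟨hx, ha, hb, hab, hV, hA⟩ := h
  obtain ⟨q, hq, hq_unique⟩ := hM x hx
  refine ⟨a, b, x, hab, h.isLeaf_new, h.symm.isLeaf_new, h.adj_new, h.symm.adj_new,
    Or.inr ⟨q, (hA _ _).2 (Or.inl hq), ?_, fun u v => ?_⟩⟩
  · ext v
    simp only [mem_relabel, Equiv.symm_swap, hV, Finset.mem_sdiff, Finset.mem_insert,
      Finset.mem_singleton, Equiv.swap_apply_def]
    grind [isLeaf_iff]
  · rw [isLeaf_iff] at hx
    simp only [relabel_adj, Equiv.symm_swap, hA, Equiv.swap_apply_def]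
    grind [→ adj_mem]

theorem cherryPick_arc (h : IsSpeciationAt M N x a b) (hM : SingleLeaf M) :
    N.CherryPick (arc x a) := by
  have ⟨hx, ha, hb, hab, hV, hA⟩ := h
  obtain ⟨r, hr, hM_adj⟩ := hM
  have hx_root : N.indeg x = 0 := by
    rw [indeg_eq_card_s8 (S := ∅)]
    · rfl
    · grind [isLeaf_iff]
  refine ⟨a, b, x, hab, h.isLeaf_new, h.symm.isLeaf_new, h.adj_new, h.symm.adj_new,
    Or.inl ⟨hx_root, ?_, fun u v => ?_⟩⟩
  · ext v
    simp only [arc, hV, hr, Finset.mem_sdiff, Finset.mem_insert, Finset.mem_singleton]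
    grind [isLeaf_iff]
  · simp only [arc, hA]
    grind

theorem uniqueLeafParents (h : IsSpeciationAt M N x a b)
    (hM : ∀ l, M.IsLeaf l → l ≠ x → ∃! q, M.adj q l) : UniqueLeafParents N := by
  have ⟨_, ha, hb, hab, hV, hA⟩ := h
  intro l hl
  obtain ⟨hlN, hl_out⟩ := isLeaf_iff.1 hl
  rw [hV, Finset.mem_insert, Finset.mem_insert] at hlN
  rcases hlN with rfl | rfl | hlM
  · exact ⟨x, h.adj_new, fun u hu => by grind [→ adj_mem]⟩
  · exact ⟨x, h.symm.adj_new, fun u hu => by grind [→ adj_mem]⟩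
  · have hlx : l ≠ x := by rintro rfl; exact hl_out a h.adj_new
    obtain ⟨q, hq, hq_unique⟩ := hM l
      (isLeaf_iff.2 ⟨hlM, fun w hw => hl_out w ((hA _ _).2 (Or.inl hw))⟩) hlx
    exact ⟨q, (hA _ _).2 (Or.inl hq), fun u hu => hq_unique u (by grind)⟩

end IsSpeciationAt

def IsHGTAt (M N : PNet) (x y u₀ v₀ px py : ℕ) : Prop :=
  x ≠ y ∧ M.IsLeaf x ∧ M.IsLeaf y ∧ M.adj px x ∧ M.adj py y ∧
    u₀ ∉ M.verts ∧ v₀ ∉ M.verts ∧ u₀ ≠ v₀ ∧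
    N.verts = insert u₀ (insert v₀ M.verts) ∧
    ∀ a b, N.adj a b ↔
      ((M.adj a b ∧ b ≠ x ∧ b ≠ y) ∨ (a = px ∧ b = u₀) ∨ (a = py ∧ b = v₀) ∨
        (a = u₀ ∧ b = x) ∨ (a = v₀ ∧ b = y) ∨ (a = u₀ ∧ b = v₀))

namespace IsHGTAt

variable {M N : PNet} {x y u₀ v₀ px py : ℕ}

theorem retCherryPick (h : IsHGTAt M N x y u₀ v₀ px py) (hM : UniqueLeafParents M) :
    N.RetCherryPick M := by
  obtain ⟨hxy, hx, hy, hpx, hpy, hu₀, hv₀, huv, hV, hA⟩ := h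
  have hx_par : ∀ u, M.adj u x → u = px := fun u hu => (hM x hx).unique hu hpx
  have hy_par : ∀ u, M.adj u y → u = py := fun u hu => (hM y hy).unique hu hpy
  rw [isLeaf_iff] at hx hy
  have hx_leaf : N.IsLeaf x := isLeaf_iff.2 ⟨by simp [hV, hx.1], by grind [→ adj_mem]⟩
  have hy_leaf : N.IsLeaf y := isLeaf_iff.2 ⟨by simp [hV, hy.1], by grind [→ adj_mem]⟩
  have hv₀_indeg : N.indeg v₀ = 2 := by
    rw [indeg_eq_card_s8 (S := {py, u₀}), Finset.card_pair (by grind [→ adj_mem])]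
    grind [→ adj_mem]
  have hu₀_indeg : N.indeg u₀ = 1 := by
    rw [indeg_eq_card_s8 (S := {px}), Finset.card_singleton]
    grind [→ adj_mem]
  refine ⟨y, x, v₀, u₀, hxy.symm, hy_leaf, hx_leaf, (hA _ _).2 (by simp), hv₀_indeg,
    (hA _ _).2 (by simp), (hA _ _).2 (by simp), hu₀_indeg.le, py, ?_, (hA _ _).2 (by simp),
    Or.inr ⟨px, (hA _ _).2 (by simp), ?_, fun a b => ?_⟩⟩
  · grind [→ adj_mem]
  · ext v
    simp only [hV, Finset.mem_sdiff, Finset.mem_insert, Finset.mem_singleton]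
    grind
  · grind [→ adj_mem]

theorem uniqueLeafParents (h : IsHGTAt M N x y u₀ v₀ px py) (hM : UniqueLeafParents M) :
    UniqueLeafParents N := by
  obtain ⟨hxy, hx, hy, hpx, hpy, hu₀, hv₀, huv, hV, hA⟩ := h
  have hx_par : ∀ u, M.adj u x → u = px := fun u hu => (hM x hx).unique hu hpx
  have hy_par : ∀ u, M.adj u y → u = py := fun u hu => (hM y hy).unique hu hpy
  intro l hl
  rw [isLeaf_iff] at hx hy hl
  by_cases hlx : l = x
  · exact ⟨u₀, by grind, fun u hu => by grind [→ adj_mem]⟩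
  by_cases hly : l = y
  · exact ⟨v₀, by grind, fun u hu => by grind [→ adj_mem]⟩
  have hlu : l ≠ u₀ := fun h => hl.2 x (by grind)
  have hlv : l ≠ v₀ := fun h => hl.2 y (by grind)
  have hlM : M.IsLeaf l :=
    isLeaf_iff.2 ⟨by grind, fun w hw => by grind [hl.2 u₀, hl.2 v₀, hl.2 w]⟩
  obtain ⟨q, hq, hq_unique⟩ := hM l hlM
  exact ⟨q, by grind, fun u hu => hq_unique u (by grind)⟩

end IsHGTAt

theorem IsTrivialNet.orchard {T : PNet} (hT : T.IsTrivialNet) : T.Orchard := ⟨T, hT, .refl⟩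

theorem Orchard.of_reduce {M N : PNet} (hM : M.Orchard) (h : N.Reduce M) : N.Orchard :=
  let ⟨T, hT, hMT⟩ := hM
  ⟨T, hT, .head h hMT⟩

theorem Speciation.orchard_uniqueLeafParents {M N : PNet} (h : M.Speciation N)
    (hM : M.SingleLeaf ∨ (M.Orchard ∧ M.UniqueLeafParents)) :
    N.Orchard ∧ N.UniqueLeafParents := by
  obtain ⟨x, a, b, h⟩ := h
  replace h : IsSpeciationAt M N x a b := h
  rcases hM with hM | ⟨hM_orchard, hM⟩
  · have hxM : x ∈ M.verts := h.1.1
    exact ⟨(isTrivialNet_arc h.ne_new).orchard.of_reduce (.inl (h.cherryPick_arc hM)),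
      h.uniqueLeafParents fun l hl hlx => absurd (hM.eq_of_mem hl.1 hxM) hlx⟩
  · exact ⟨(hM_orchard.relabel _).of_reduce (.inl (h.cherryPick_relabel hM)),
      h.uniqueLeafParents fun l hl _ => hM l hl⟩

theorem HGT.orchard_uniqueLeafParents {M N : PNet} (h : M.HGT N)
    (hM : M.SingleLeaf ∨ (M.Orchard ∧ M.UniqueLeafParents)) :
    N.Orchard ∧ N.UniqueLeafParents := by
  rcases hM with ⟨-, -, hM_adj⟩ | ⟨hM_orchard, hM⟩
  · obtain ⟨x, -, -, -, px, -, -, -, -, hpx, -⟩ := h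
    exact (hM_adj px x hpx).elim
  · obtain ⟨x, y, u₀, v₀, px, py, h⟩ := h
    replace h : IsHGTAt M N x y u₀ v₀ px py := h
    exact ⟨hM_orchard.of_reduce (.inr (h.retCherryPick hM)), h.uniqueLeafParents hM⟩

theorem singleLeaf_or_orchard_of_generated {N₀ N : PNet} (h0 : N₀.SingleLeaf)
    (hgen : Relation.ReflTransGen (fun A B => Speciation A B ∨ HGT A B) N₀ N) :
    N.SingleLeaf ∨ (N.Orchard ∧ N.UniqueLeafParents) := by
  induction hgen with
  | refl => exact .inl h0
  | tail _ hstep ih =>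
    exact .inr (hstep.elim (·.orchard_uniqueLeafParents ih) (·.orchard_uniqueLeafParents ih))

theorem IsBinary.not_singleLeaf {N : PNet} (hN : N.IsBinary) : ¬ N.SingleLeaf := by
  rintro ⟨v, -, hN_adj⟩
  obtain ⟨-, ρ, hρ, hρ_out, -⟩ := hN
  have : N.outdeg ρ = 0 := (isLeaf_iff.2 ⟨hρ.1, hN_adj ρ⟩).2
  omega

end PNet

open PNet in
/-- Every binary phylogenetic network obtained from the single-leaf network by
speciation events and n-type (HGT) reticulation events is orchard. -/
theorem stmt8 (N₀ N : PNet) (h0 : SingleLeaf N₀)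
    (hgen : Relation.ReflTransGen (fun A B => Speciation A B ∨ HGT A B) N₀ N)
    (hbin : N.IsBinary) :
    N.Orchard :=
  ((singleLeaf_or_orchard_of_generated h0 hgen).resolve_left hbin.not_singleLeaf).1
end
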